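/- arXiv:1308.2794 — 5 statements merged into one kernel-verified Lean document; each statement's English description precedes it below -/
import Mathlib

section
/- For any Boolean function f on {0,1}^n with μ(f) = t, the total influence I(f) = Σ_{ℓ=1}^n I_ℓ(f) satisfies I(f) ≥ 2t·log₂(1/t), where I_ℓ(f) is the probability that flipping coordinate ℓ changes the value of f. -/
open Finset

noncomputable def muF {n : ℕ} (f : (Fin n → Bool) → Bool) : ℝ :=
  ((Finset.univ.filter fun x : Fin n → Bool => f x = true).card : ℝ) / 2 ^ n

noncomputable def infl {n : ℕ} (f : (Fin n → Bool) → Bool) (ℓ : Fin n) : ℝ :=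
  ((Finset.univ.filter fun x : Fin n → Bool =>
      f x ≠ f (Function.update x ℓ (!x ℓ))).card : ℝ) / 2 ^ n


private lemma hasDerivAt_K (x : ℝ) (hx : 0 < x) :
    HasDerivAt (fun u : ℝ => (1+u)*Real.log (1+u) - u*Real.log u - 2*Real.log 2*u)
      (Real.log (1+x) - Real.log x - 2*Real.log 2) x := by
  have hA : HasDerivAt (fun u : ℝ => (1+u) * Real.log (1+u)) (Real.log (1+x) + 1) x := by
    have := (Real.hasDerivAt_mul_log (x := 1 + x) (by positivity)).comp x
      ((hasDerivAt_id x).const_add 1)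
    simpa [Function.comp_def] using this
  have hB : HasDerivAt (fun u : ℝ => u * Real.log u) (Real.log x + 1) x :=
    Real.hasDerivAt_mul_log hx.ne'
  have hC : HasDerivAt (fun u : ℝ => 2*Real.log 2*u) (2*Real.log 2) x := by
    simpa using (hasDerivAt_id x).const_mul (2*Real.log 2)
  have := (hA.sub hB).sub hC
  exact this.congr_deriv (by ring)

private lemma keyK : ∀ u ∈ Set.Icc (0:ℝ) 1,
    0 ≤ (1+u)*Real.log (1+u) - u*Real.log u - 2*Real.log 2*u := by
  set K : ℝ → ℝ := fun u => (1+u)*Real.log (1+u) - u*Real.log u - 2*Real.log 2*u with hK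
  have hcont : Continuous K := by
    apply ((Real.continuous_mul_log.comp (continuous_const.add continuous_id)).sub
      Real.continuous_mul_log).sub (continuous_const.mul continuous_id)
  intro u hu
  obtain ⟨hu0, hu1⟩ := hu
  have hK0 : K 0 = 0 := by simp [hK]
  have hK1 : K 1 = 0 := by
    simp only [hK]
    rw [show (1:ℝ)+1 = 2 by norm_num, Real.log_one]
    ring
  rcases le_total u (1/3) with h | h
  · -- monotone on [0, 1/3]
    have hmono : MonotoneOn K (Set.Icc (0:ℝ) (1/3)) := by
      apply monotoneOn_of_deriv_nonneg (convex_Icc _ _) hcont.continuousOn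
      · intro x hx
        rw [interior_Icc] at hx
        exact (hasDerivAt_K x hx.1).differentiableAt.differentiableWithinAt
      · intro x hx
        rw [interior_Icc] at hx
        rw [(hasDerivAt_K x hx.1).deriv]
        have h4 : Real.log x + 2*Real.log 2 = Real.log (4*x) := by
          rw [Real.log_mul (by norm_num) hx.1.ne', show (4:ℝ) = 2^2 by norm_num,
            Real.log_pow]
          push_cast; ring
        have : Real.log (4*x) ≤ Real.log (1+x) := by
          apply Real.log_le_log (by linarith [hx.1])
          linarith [hx.2]
        linarith
    have := hmono (Set.mem_Icc.2 ⟨le_refl 0, by norm_num⟩) (Set.mem_Icc.2 ⟨hu0, h⟩) hu0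
    rw [hK0] at this
    exact this
  · -- antitone on [1/3, 1]
    have hanti : AntitoneOn K (Set.Icc (1/3:ℝ) 1) := by
      apply antitoneOn_of_deriv_nonpos (convex_Icc _ _) hcont.continuousOn
      · intro x hx
        rw [interior_Icc] at hx
        have hx0 : (0:ℝ) < x := by linarith [hx.1]
        exact (hasDerivAt_K x hx0).differentiableAt.differentiableWithinAt
      · intro x hx
        rw [interior_Icc] at hx
        have hx0 : (0:ℝ) < x := by linarith [hx.1]
        rw [(hasDerivAt_K x hx0).deriv]
        have h4 : Real.log x + 2*Real.log 2 = Real.log (4*x) := by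
          rw [Real.log_mul (by norm_num) hx0.ne', show (4:ℝ) = 2^2 by norm_num,
            Real.log_pow]
          push_cast; ring
        have : Real.log (1+x) ≤ Real.log (4*x) := by
          apply Real.log_le_log (by linarith [hx0])
          linarith [hx.1]
        linarith
    have := hanti (Set.mem_Icc.2 ⟨h, hu1⟩) (Set.mem_Icc.2 ⟨by norm_num, le_refl 1⟩) hu1
    rw [hK1] at this
    exact this

private lemma keyF2 {a b : ℝ} (ha : 0 ≤ a) (hab : a ≤ b) (hb : 0 < b) :
    0 ≤ (a+b)*Real.log (a+b) - a*Real.log a - b*Real.log b - 2*a*Real.log 2 := by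
  rcases eq_or_lt_of_le ha with ha0 | ha'
  · rw [← ha0]; simp
  · set u : ℝ := a / b with hu
    have hu0 : 0 < u := div_pos ha' hb
    have hu1 : u ≤ 1 := (div_le_one hb).2 hab
    have ha_eq : a = u * b := by rw [hu, div_mul_cancel₀ a hb.ne']
    have h1 : a + b = b * (1 + u) := by rw [ha_eq]; ring
    have h2 : Real.log (a + b) = Real.log b + Real.log (1 + u) := by
      rw [h1, Real.log_mul hb.ne' (by positivity)]
    have h3 : Real.log a = Real.log u + Real.log b := by
      rw [ha_eq, Real.log_mul hu0.ne' hb.ne']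
    have hexp : (a+b)*Real.log (a+b) - a*Real.log a - b*Real.log b - 2*a*Real.log 2
        = b * ((1+u)*Real.log (1+u) - u*Real.log u - 2*Real.log 2*u) := by
      rw [h2, h3, ha_eq]; ring
    rw [hexp]
    exact mul_nonneg hb.le (keyK u ⟨hu0.le, hu1⟩)

private lemma phi_ineq {a b : ℝ} (ha : 0 ≤ a) (hab : a ≤ b) :
    (a + b) * Real.logb 2 (1/((a+b)/2)) ≤
      a * Real.logb 2 (1/a) + b * Real.logb 2 (1/b) + (b - a) := by
  have hlog2 : (0:ℝ) < Real.log 2 := Real.log_pos (by norm_num)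
  rcases eq_or_lt_of_le (ha.trans hab) with hb0 | hb
  · have ha0 : a = 0 := le_antisymm (hab.trans hb0.symm.le) ha
    simp [ha0, ← hb0]
  · have key := keyF2 ha hab hb
    have hab0 : (0:ℝ) < a + b := by linarith
    simp only [Real.logb, one_div, Real.log_inv]
    rw [Real.log_div hab0.ne' (by norm_num), ← sub_nonneg]
    have hexpr : a * (-Real.log a / Real.log 2) + b * (-Real.log b / Real.log 2) + (b - a)
        - (a + b) * (-(Real.log (a+b) - Real.log 2) / Real.log 2)
        = ((a+b)*Real.log (a+b) - a*Real.log a - b*Real.log b - 2*a*Real.log 2)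
          / Real.log 2 := by
      field_simp
      ring
    rw [hexpr]
    exact div_nonneg key hlog2.le

private lemma sum_split {n : ℕ} (g : (Fin (n+1) → Bool) → ℝ) :
    ∑ x : Fin (n+1) → Bool, g x
      = ∑ y : Fin n → Bool, (g (Fin.cons false y) + g (Fin.cons true y)) := by
  rw [← (Fin.consEquiv (fun _ : Fin (n+1) => Bool)).sum_comp g]
  rw [Fintype.sum_prod_type_right]
  apply Finset.sum_congr rfl
  intro y _
  rw [Fintype.sum_bool]
  show g (Fin.cons true y) + g (Fin.cons false y) = _
  ring

private lemma card_filter_real {α : Type*} [Fintype α] (p : α → Prop) [DecidablePred p] :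
    ((Finset.univ.filter p).card : ℝ) = ∑ x : α, if p x then (1:ℝ) else 0 := by
  rw [Finset.card_filter]
  push_cast
  rfl

private lemma muF_split {n : ℕ} (f : (Fin (n+1) → Bool) → Bool) :
    muF f = (muF (fun y => f (Fin.cons false y)) + muF (fun y => f (Fin.cons true y))) / 2 := by
  unfold muF
  rw [card_filter_real, card_filter_real, card_filter_real, sum_split (fun x => if f x = true then (1:ℝ) else 0)]
  rw [Finset.sum_add_distrib, pow_succ]
  ring

private lemma infl_succ {n : ℕ} (f : (Fin (n+1) → Bool) → Bool) (ℓ : Fin n) :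
    infl f ℓ.succ = (infl (fun y => f (Fin.cons false y)) ℓ + infl (fun y => f (Fin.cons true y)) ℓ) / 2 := by
  unfold infl
  rw [card_filter_real, card_filter_real, card_filter_real,
    sum_split (fun x => if f x ≠ f (Function.update x ℓ.succ (!x ℓ.succ)) then (1:ℝ) else 0)]
  simp only [Fin.cons_succ, ← Fin.cons_update]
  rw [Finset.sum_add_distrib, pow_succ]
  ring

private lemma infl_zero {n : ℕ} (f : (Fin (n+1) → Bool) → Bool) :
    infl f 0 = (∑ y : Fin n → Bool,
      if f (Fin.cons false y) ≠ f (Fin.cons true y) then (1:ℝ) else 0) / 2^n := by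
  unfold infl
  rw [card_filter_real,
    sum_split (fun x => if f x ≠ f (Function.update x 0 (!x 0)) then (1:ℝ) else 0)]
  simp only [Fin.cons_zero, Fin.update_cons_zero, Bool.not_false, Bool.not_true]
  have : ∀ y : Fin n → Bool,
      ((if f (Fin.cons false y) ≠ f (Fin.cons true y) then (1:ℝ) else 0)
        + (if f (Fin.cons true y) ≠ f (Fin.cons false y) then (1:ℝ) else 0))
      = 2 * (if f (Fin.cons false y) ≠ f (Fin.cons true y) then (1:ℝ) else 0) := by
    intro y
    by_cases h : f (Fin.cons false y) = f (Fin.cons true y) <;> simp [h, Ne, eq_comm] <;> ring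
  rw [Finset.sum_congr rfl (fun y _ => this y), ← Finset.mul_sum, pow_succ]
  ring

private lemma abs_le_diffcount {n : ℕ} (f0 f1 : (Fin n → Bool) → Bool) :
    |muF f1 - muF f0| ≤ (∑ y : Fin n → Bool, if f0 y ≠ f1 y then (1:ℝ) else 0) / 2^n := by
  have k : ∀ (g h : (Fin n → Bool) → Bool), (∀ y, (g y ≠ h y) → (f0 y ≠ f1 y)) →
      (∑ y : Fin n → Bool, if g y = true then (1:ℝ) else 0)
        ≤ (∑ y : Fin n → Bool, if h y = true then (1:ℝ) else 0)
          + ∑ y : Fin n → Bool, if f0 y ≠ f1 y then (1:ℝ) else 0 := by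
    intro g h hgh
    rw [← Finset.sum_add_distrib]
    apply Finset.sum_le_sum
    intro y _
    by_cases hd : f0 y = f1 y
    · have hg : g y = h y := by
        by_contra hc
        exact (hgh y hc) hd
      rw [hg]
      simp [hd]
    · rw [if_pos hd]
      have hg1 : (if g y = true then (1:ℝ) else 0) ≤ 1 := by split_ifs <;> norm_num
      have hg2 : (0:ℝ) ≤ if h y = true then (1:ℝ) else 0 := by split_ifs <;> norm_num
      linarith
  have hpow : (0:ℝ) < 2^n := by positivity
  unfold muF
  rw [card_filter_real, card_filter_real, abs_sub_le_iff]
  constructor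
  · rw [div_sub_div_same]
    exact (div_le_div_iff_of_pos_right hpow).2 (by linarith [k f1 f0 (fun y hy e => hy e.symm)])
  · rw [div_sub_div_same]
    exact (div_le_div_iff_of_pos_right hpow).2 (by linarith [k f0 f1 (fun y hy => hy)])

private lemma muF_nonneg {n : ℕ} (f : (Fin n → Bool) → Bool) : 0 ≤ muF f := by
  unfold muF; positivity

/-- Edge-isoperimetric inequality: the total influence of a Boolean function `f`
with `μ(f) = t` is at least `2 t log₂(1/t)`. -/
theorem total_influence_lower_bound {n : ℕ} (f : (Fin n → Bool) → Bool)
    (t : ℝ) (ht : muF f = t) :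
    ∑ ℓ : Fin n, infl f ℓ ≥ 2 * t * Real.logb 2 (1 / t) := by
  subst ht
  induction n with
  | zero =>
    have h1 : (Finset.univ.filter fun x : Fin 0 → Bool => f x = true).card ≤ 1 := by
      refine le_trans (Finset.card_filter_le _ _) ?_
      simp
    have h2 : muF f = ((Finset.univ.filter fun x : Fin 0 → Bool => f x = true).card : ℝ) := by
      simp [muF]
    rcases Nat.le_one_iff_eq_zero_or_eq_one.1 h1 with h | h <;> rw [h2, h] <;> simp
  | succ n ih =>
    have h0 := ih (fun y => f (Fin.cons false y))
    have h1 := ih (fun y => f (Fin.cons true y))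
    set t0 : ℝ := muF (fun y => f (Fin.cons false y)) with ht0
    set t1 : ℝ := muF (fun y => f (Fin.cons true y)) with ht1
    have ht0n : 0 ≤ t0 := muF_nonneg _
    have ht1n : 0 ≤ t1 := muF_nonneg _
    have hmu : muF f = (t0 + t1) / 2 := muF_split f
    have habs : |t1 - t0| ≤ infl f 0 := by
      rw [infl_zero f]
      exact abs_le_diffcount _ _
    have hd1 : t1 - t0 ≤ infl f 0 := le_trans (le_abs_self _) habs
    have hd2 : t0 - t1 ≤ infl f 0 := le_trans (by rw [abs_sub_comm]; exact le_abs_self _) habs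
    have hsum : ∑ ℓ : Fin (n+1), infl f ℓ
        = infl f 0 + (∑ ℓ : Fin n, infl (fun y => f (Fin.cons false y)) ℓ
            + ∑ ℓ : Fin n, infl (fun y => f (Fin.cons true y)) ℓ) / 2 := by
      rw [Fin.sum_univ_succ]
      congr 1
      rw [Finset.sum_congr rfl (fun ℓ _ => infl_succ f ℓ), ← Finset.sum_div,
        Finset.sum_add_distrib]
    rw [hmu, hsum]
    have h2t : 2 * ((t0 + t1) / 2) = t0 + t1 := by ring
    rw [h2t]
    rcases le_total t0 t1 with hc | hc
    · have := phi_ineq ht0n hc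
      linarith
    · have := phi_ineq ht1n hc
      rw [add_comm t1 t0] at this
      linarith
end

section
/- If F ⊆ 2^{[n]} has |F| > Σ_{i<r} C(n,i), then there exists a set Y ⊆ [n] with |Y| = r that is shattered by F, i.e., {S ∩ Y : S ∈ F} = 2^Y. -/
/-- The Sauer–Shelah theorem: if a family `F` of subsets of `[n]` has more than
`∑_{i<r} C(n,i)` members, then `F` shatters some set `Y` of size `r`, i.e. every
subset of `Y` is the intersection of `Y` with a member of `F`. -/
theorem sauer_shelah {n r : ℕ} (F : Finset (Finset (Fin n)))
    (hF : F.card > ∑ i ∈ Finset.range r, n.choose i) :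
    ∃ Y : Finset (Fin n), Y.card = r ∧ ∀ Z ⊆ Y, ∃ S ∈ F, S ∩ Y = Z := by
  by_contra h
  push_neg at h
  -- every shattered set has card < r
  have hsmall : ∀ s ∈ F.shatterer, s.card < r := by
    intro s hs
    by_contra hc
    push_neg at hc
    obtain ⟨t, hts, htc⟩ := Finset.exists_subset_card_eq hc
    have hsh : F.Shatters t := (Finset.mem_shatterer.1 hs).mono_right hts
    obtain ⟨Z, hZ, hSZ⟩ := h t htc
    obtain ⟨S, hSF, hst⟩ := hsh hZ
    exact hSZ S hSF (by rw [Finset.inter_comm]; exact hst)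
  have hsub : F.shatterer ⊆ (Finset.range r).biUnion
      (fun i => Finset.univ.powersetCard i) := by
    intro s hs
    simp only [Finset.mem_biUnion, Finset.mem_range, Finset.mem_powersetCard]
    exact ⟨s.card, hsmall s hs, s.subset_univ, rfl⟩
  have hcard : F.shatterer.card ≤ ∑ i ∈ Finset.range r, n.choose i := by
    calc F.shatterer.card ≤ ((Finset.range r).biUnion
        (fun i => Finset.univ.powersetCard i)).card := Finset.card_le_card hsub
      _ ≤ ∑ i ∈ Finset.range r, (Finset.univ.powersetCard i : Finset (Finset (Fin n))).card :=
        Finset.card_biUnion_le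
      _ = ∑ i ∈ Finset.range r, n.choose i := by
        simp [Finset.card_powersetCard]
  exact absurd (F.card_le_card_shatterer.trans hcard) (not_le.2 hF)
end

section
/- If f is a Boolean function on {0,1}^n with μ(f) = 1/2, then there exists a set S ⊆ [n] with |S| = ⌈n/2⌉ such that J⁺_S(f) = 1, i.e., for every setting of the variables outside S there is a setting of the variables in S making f equal 1. -/
open Finset

private lemma sum_choose_lt' {n k : ℕ} (hn : 1 ≤ n) (hk : 2 * k ≤ n) :
    ∑ i ∈ range k, n.choose i < 2 ^ (n - 1) := by
  have hA : ∑ i ∈ range k, n.choose i = ∑ i ∈ Ico (n + 1 - k) (n + 1), n.choose i := by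
    refine sum_nbij' (fun i => n - i) (fun i => n - i) ?_ ?_ ?_ ?_ ?_
    · intro i hi
      simp only [mem_range] at hi
      simp only [mem_Ico]
      omega
    · intro i hi
      simp only [mem_Ico] at hi
      simp only [mem_range]
      omega
    · intro i hi; simp only [mem_range] at hi; omega
    · intro i hi; simp only [mem_Ico] at hi; omega
    · intro i hi
      simp only [mem_range] at hi
      rw [Nat.choose_symm (by omega)]
  have hdisj : Disjoint (range k ∪ {k}) (Ico (n + 1 - k) (n + 1)) := by
    simp only [disjoint_left, mem_union, mem_range, mem_singleton, mem_Ico]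
    omega
  have hdisj2 : Disjoint (range k) ({k} : Finset ℕ) := by
    simp only [disjoint_left, mem_range, mem_singleton]; omega
  have hsub : (range k ∪ {k}) ∪ Ico (n + 1 - k) (n + 1) ⊆ range (n + 1) := by
    intro i hi
    simp only [mem_union, mem_range, mem_singleton, mem_Ico] at hi ⊢
    omega
  have hbound : (∑ i ∈ range k, n.choose i) + n.choose k +
      ∑ i ∈ Ico (n + 1 - k) (n + 1), n.choose i ≤ 2 ^ n := by
    rw [← Nat.sum_range_choose n]
    calc _ = ∑ i ∈ (range k ∪ {k}) ∪ Ico (n + 1 - k) (n + 1), n.choose i := by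
            rw [sum_union hdisj, sum_union hdisj2, sum_singleton]
      _ ≤ _ := sum_le_sum_of_subset hsub
  have hpos : 0 < n.choose k := Nat.choose_pos (by omega)
  have h2 : 2 ^ n = 2 * 2 ^ (n - 1) := by
    rw [← pow_succ']
    congr 1
    omega
  omega



/-- `J⁺_S(f)`: the probability that a uniform random setting of the variables outside `S`
can be completed on `S` to a point where `f = 1`. -/
noncomputable def Jplus {n : ℕ} (f : (Fin n → Bool) → Bool) (S : Finset (Fin n)) : ℝ :=
  ((Finset.univ.filter fun x : Fin n → Bool =>
      ∃ y : Fin n → Bool, (∀ i ∉ S, y i = x i) ∧ f y = true).card : ℝ) / 2 ^ n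

/-- Encode a Boolean point as the finset of its `true` coordinates. -/
private def toFS {n : ℕ} (x : Fin n → Bool) : Finset (Fin n) :=
  Finset.univ.filter fun i => x i = true

private lemma toFS_inj {n : ℕ} : Function.Injective (toFS (n := n)) := by
  intro x y h
  funext i
  have : (i ∈ toFS x) = (i ∈ toFS y) := by rw [h]
  simp only [toFS, mem_filter, mem_univ, true_and, eq_iff_iff] at this
  rcases Bool.eq_false_or_eq_true (x i) with hx | hx <;>
    rcases Bool.eq_false_or_eq_true (y i) with hy | hy <;> simp_all

/-- If `μ(f) = 1/2` then there is a set `S` of `⌈n/2⌉` coordinates with `J⁺_S(f) = 1`: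
every setting of the variables outside `S` can be completed on `S` to make `f = 1`.
(A consequence of the Sauer–Shelah theorem.) -/
theorem exists_half_set_Jplus_one {n : ℕ} (f : (Fin n → Bool) → Bool)
    (hf : muF f = 1 / 2) :
    ∃ S : Finset (Fin n), S.card = (n + 1) / 2 ∧ Jplus f S = 1 := by
  classical
  set F := Finset.univ.filter fun x : Fin n → Bool => f x = true with hF
  -- card F = 2^(n-1), and n ≥ 1
  have hcard2 : 2 * F.card = 2 ^ n := by
    have h2 : (0 : ℝ) < 2 ^ n := by positivity
    have : (F.card : ℝ) / 2 ^ n = 1 / 2 := hf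
    have : (2 * F.card : ℝ) = 2 ^ n := by field_simp at this ⊢; linarith
    exact_mod_cast this
  have hn : 1 ≤ n := by
    by_contra h
    interval_cases n
    omega
  have hcard : F.card = 2 ^ (n - 1) := by
    have : 2 ^ n = 2 * 2 ^ (n - 1) := by
      rw [← pow_succ']; congr 1; omega
    omega
  set k := n - (n + 1) / 2 with hk
  have hk2 : 2 * k ≤ n := by omega
  -- the family
  set 𝒜 := F.image toFS with h𝒜
  have h𝒜card : 𝒜.card = 2 ^ (n - 1) := by
    rw [h𝒜, Finset.card_image_of_injective _ toFS_inj, hcard]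
  -- exists shattered set of size k
  have hT : ∃ T : Finset (Fin n), 𝒜.Shatters T ∧ T.card = k := by
    by_contra h
    push_neg at h
    have hsmall : ∀ s ∈ 𝒜.shatterer, s.card < k := by
      intro s hs
      by_contra hlt
      push_neg at hlt
      obtain ⟨T, hTs, hTcard⟩ := Finset.exists_subset_card_eq hlt
      exact h T ((Finset.mem_shatterer.1 hs).mono_right hTs) hTcard
    have hsub : 𝒜.shatterer ⊆ (range k).biUnion fun i => Finset.powersetCard i Finset.univ := by
      intro s hs
      simp only [Finset.mem_biUnion, mem_range, Finset.mem_powersetCard_univ]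
      exact ⟨s.card, hsmall s hs, rfl⟩
    have hle : 𝒜.shatterer.card ≤ ∑ i ∈ range k, n.choose i := by
      calc 𝒜.shatterer.card ≤ _ := Finset.card_le_card hsub
        _ ≤ ∑ i ∈ range k, (Finset.powersetCard i (Finset.univ : Finset (Fin n))).card :=
            Finset.card_biUnion_le
        _ = ∑ i ∈ range k, n.choose i := by
            simp [Finset.card_powersetCard, Finset.card_univ]
    have := Finset.card_le_card_shatterer 𝒜
    have := sum_choose_lt' hn hk2
    omega
  obtain ⟨T, hTsh, hTcard⟩ := hT
  refine ⟨Tᶜ, ?_, ?_⟩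
  · rw [Finset.card_compl, hTcard, Fintype.card_fin]; omega
  · -- Jplus = 1
    have hfull : (Finset.univ.filter fun x : Fin n → Bool =>
        ∃ y : Fin n → Bool, (∀ i ∉ Tᶜ, y i = x i) ∧ f y = true) = Finset.univ := by
      refine Finset.eq_univ_of_forall fun x => ?_
      simp only [Finset.mem_filter, Finset.mem_univ, true_and]
      obtain ⟨u, hu𝒜, hu⟩ := hTsh (Finset.inter_subset_left (s₂ := toFS x))
      obtain ⟨y, hyF, rfl⟩ := Finset.mem_image.1 hu𝒜
      refine ⟨y, fun i hi => ?_, (Finset.mem_filter.1 hyF).2⟩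
      rw [Finset.notMem_compl] at hi
      have h1 : i ∈ T ∩ toFS y ↔ i ∈ T ∩ toFS x := by rw [hu]
      simp only [Finset.mem_inter, hi, true_and, toFS, Finset.mem_filter,
        Finset.mem_univ] at h1
      rcases Bool.eq_false_or_eq_true (y i) with hy | hy <;>
        rcases Bool.eq_false_or_eq_true (x i) with hx | hx <;> simp_all
    rw [Jplus, hfull]
    rw [Finset.card_univ, Fintype.card_fun, Fintype.card_fin, Fintype.card_bool]
    field_simp
    norm_num
end

section
/- Fix constants a, t ∈ (0,1). Assume the KKL theorem: there is c₀ > 0 such that any Boolean function g on {0,1}^N with μ(g) = s has a coordinate ℓ with I_ℓ(g) ≥ c₀·s(1−s)·log N / N. Then there exists c > 0 such that for every Boolean function f on {0,1}^n with μ(f) = t there is S ⊆ [n] with |S| ≤ an and J⁺_S(f) ≥ 1 − n^{−c}. -/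
namespace RepeatedKKL

variable {n : ℕ}

lemma card_cube (n : ℕ) : Fintype.card (Fin n → Bool) = 2 ^ n := by simp

lemma frac_mem (p : (Fin n → Bool) → Prop) [DecidablePred p] :
    ((Finset.univ.filter p).card : ℝ) / 2 ^ n ∈ Set.Icc (0:ℝ) 1 := by
  constructor
  · positivity
  · rw [div_le_one (by positivity)]
    calc ((Finset.univ.filter p).card : ℝ) ≤ ((Finset.univ : Finset (Fin n → Bool)).card : ℝ) := by
          exact_mod_cast Finset.card_le_card (Finset.filter_subset _ _)
      _ = 2 ^ n := by rw [Finset.card_univ, card_cube]; push_cast; ring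

lemma Jplus_nonneg (f : (Fin n → Bool) → Bool) (S : Finset (Fin n)) :
    0 ≤ Jplus f S := (frac_mem _).1

lemma Jplus_le_one (f : (Fin n → Bool) → Bool) (S : Finset (Fin n)) :
    Jplus f S ≤ 1 := (frac_mem _).2

lemma muF_mem (f : (Fin n → Bool) → Bool) : muF f ∈ Set.Icc (0:ℝ) 1 := frac_mem _

lemma Jplus_empty (f : (Fin n → Bool) → Bool) : Jplus f ∅ = muF f := by
  unfold Jplus muF
  congr 2
  apply congrArg
  apply Finset.filter_congr
  intro x _
  simp only [Finset.notMem_empty]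
  constructor
  · rintro ⟨y, hy, hfy⟩
    have : y = x := funext fun i => hy i (by simp)
    rwa [this] at hfy
  · intro h; exact ⟨x, fun i _ => rfl, h⟩

/-- The indicator of "some completion inside `S` makes `f` true". -/
def gS (f : (Fin n → Bool) → Bool) (S : Finset (Fin n)) (x : Fin n → Bool) : Bool :=
  decide (∃ y : Fin n → Bool, (∀ i ∉ S, y i = x i) ∧ f y = true)

lemma gS_eq_true {f : (Fin n → Bool) → Bool} {S : Finset (Fin n)} {x : Fin n → Bool} :
    gS f S x = true ↔ ∃ y : Fin n → Bool, (∀ i ∉ S, y i = x i) ∧ f y = true := by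
  simp [gS]

def flipAt (ℓ : Fin n) (x : Fin n → Bool) : Fin n → Bool := Function.update x ℓ (!(x ℓ))

lemma flip_invol (ℓ : Fin n) : Function.Involutive (flipAt ℓ) := by
  intro x
  unfold flipAt
  ext i
  rcases eq_or_ne i ℓ with rfl | h
  · simp
  · simp [Function.update_of_ne h]

lemma gS_insert_iff (f : (Fin n → Bool) → Bool) (S : Finset (Fin n)) (ℓ : Fin n)
    (x : Fin n → Bool) :
    (∃ y : Fin n → Bool, (∀ i ∉ insert ℓ S, y i = x i) ∧ f y = true) ↔
      (gS f S x = true ∨ gS f S (flipAt ℓ x) = true) := by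
  constructor
  · rintro ⟨y, hy, hfy⟩
    by_cases hb : y ℓ = x ℓ
    · left
      rw [gS_eq_true]
      refine ⟨y, fun i hi => ?_, hfy⟩
      rcases eq_or_ne i ℓ with rfl | hne
      · exact hb
      · exact hy i (by simp [hi, hne])
    · right
      rw [gS_eq_true]
      refine ⟨y, fun i hi => ?_, hfy⟩
      rcases eq_or_ne i ℓ with rfl | hne
      · rw [flipAt, Function.update_self]
        cases hxb : x i <;> cases hyb : y i <;> simp_all
      · rw [flipAt, Function.update_of_ne hne]
        exact hy i (by simp [hi, hne])
  · rintro (h | h) <;> rw [gS_eq_true] at h <;> obtain ⟨y, hy, hfy⟩ := h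
    · exact ⟨y, fun i hi => hy i (fun hmem => hi (Finset.mem_insert_of_mem hmem)), hfy⟩
    · refine ⟨y, fun i hi => ?_, hfy⟩
      have hiℓ : i ≠ ℓ := fun h => hi (h ▸ Finset.mem_insert_self ℓ S)
      have := hy i (fun hmem => hi (Finset.mem_insert_of_mem hmem))
      rwa [flipAt, Function.update_of_ne hiℓ] at this

lemma key_count (f : (Fin n → Bool) → Bool) (S : Finset (Fin n)) (ℓ : Fin n) :
    2 * (Finset.univ.filter fun x : Fin n → Bool =>
        ∃ y : Fin n → Bool, (∀ i ∉ insert ℓ S, y i = x i) ∧ f y = true).card =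
      2 * (Finset.univ.filter fun x : Fin n → Bool => gS f S x = true).card +
      (Finset.univ.filter fun x : Fin n → Bool =>
        gS f S x ≠ gS f S (flipAt ℓ x)).card := by
  classical
  have h1 : ∀ (p : (Fin n → Bool) → Prop) [DecidablePred p],
      (Finset.univ.filter p).card = ∑ x : Fin n → Bool, (if p x then 1 else 0) := by
    intro p _; rw [Finset.card_filter]
  rw [h1, h1, h1, Finset.mul_sum]
  have hre : ∑ x : Fin n → Bool, (if gS f S (flipAt ℓ x) = true then 1 else 0)
      = ∑ x : Fin n → Bool, (if gS f S x = true then 1 else 0) :=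
    Fintype.sum_bijective (flipAt ℓ) (flip_invol ℓ).bijective _ _ (fun x => rfl)
  have hpt : ∀ x : Fin n → Bool,
      (2:ℕ) * (if (∃ y : Fin n → Bool, (∀ i ∉ insert ℓ S, y i = x i) ∧ f y = true)
          then 1 else 0) =
        (if gS f S x = true then 1 else 0) + (if gS f S (flipAt ℓ x) = true then 1 else 0) +
        (if gS f S x ≠ gS f S (flipAt ℓ x) then 1 else 0) := by
    intro x
    rw [if_congr (gS_insert_iff f S ℓ x) rfl rfl]
    cases h1 : gS f S x <;> cases h2 : gS f S (flipAt ℓ x) <;> simp [h1, h2]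
  calc ∑ x : Fin n → Bool, 2 * (if (∃ y : Fin n → Bool,
          (∀ i ∉ insert ℓ S, y i = x i) ∧ f y = true) then 1 else 0)
      = ∑ x : Fin n → Bool, ((if gS f S x = true then 1 else 0)
          + (if gS f S (flipAt ℓ x) = true then 1 else 0)
          + (if gS f S x ≠ gS f S (flipAt ℓ x) then 1 else 0)) := by
        exact Finset.sum_congr rfl fun x _ => hpt x
    _ = _ := by
        rw [Finset.sum_add_distrib, Finset.sum_add_distrib, hre]; ring

lemma muF_gS (f : (Fin n → Bool) → Bool) (S : Finset (Fin n)) :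
    muF (gS f S) = Jplus f S := by
  unfold muF Jplus
  congr 2
  apply congrArg
  apply Finset.filter_congr
  intro x _
  simp [gS]

lemma Jplus_insert (f : (Fin n → Bool) → Bool) (S : Finset (Fin n)) (ℓ : Fin n) :
    Jplus f (insert ℓ S) = Jplus f S + infl (gS f S) ℓ / 2 := by
  have hk := key_count f S ℓ
  have hpos : (0:ℝ) < 2 ^ n := by positivity
  have hflip : (Finset.univ.filter fun x : Fin n → Bool =>
        gS f S x ≠ gS f S (Function.update x ℓ (!x ℓ))).card
      = (Finset.univ.filter fun x : Fin n → Bool =>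
        gS f S x ≠ gS f S (flipAt ℓ x)).card := rfl
  unfold Jplus infl
  rw [hflip]
  have hmg : (Finset.univ.filter fun x : Fin n → Bool => gS f S x = true)
      = (Finset.univ.filter fun x : Fin n → Bool =>
          ∃ y : Fin n → Bool, (∀ i ∉ S, y i = x i) ∧ f y = true) := by
    apply Finset.filter_congr
    intro x _
    simp [gS]
  have hR := congrArg (fun k : ℕ => (k : ℝ)) hk
  push_cast at hR
  rw [hmg] at hR
  have : ((Finset.univ.filter fun x : Fin n → Bool =>
        ∃ y : Fin n → Bool, (∀ i ∉ insert ℓ S, y i = x i) ∧ f y = true).card : ℝ)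
      = ((Finset.univ.filter fun x : Fin n → Bool =>
          ∃ y : Fin n → Bool, (∀ i ∉ S, y i = x i) ∧ f y = true).card : ℝ)
        + ((Finset.univ.filter fun x : Fin n → Bool =>
            gS f S x ≠ gS f S (flipAt ℓ x)).card : ℝ) / 2 := by linarith
  rw [this]
  ring

end RepeatedKKL

open RepeatedKKL in
/-- Assuming the KKL theorem, for fixed `a, t ∈ (0,1)` there is `c > 0` such that every
Boolean function `f` on `{0,1}^n` with `μ(f) = t` has a set `S` of at most `a·n`
coordinates with `J⁺_S(f) ≥ 1 - n^{-c}`. -/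
theorem repeated_kkl (a t : ℝ) (ha : a ∈ Set.Ioo (0 : ℝ) 1) (ht : t ∈ Set.Ioo (0 : ℝ) 1)
    (hKKL : ∃ c₀ : ℝ, 0 < c₀ ∧ ∀ N : ℕ, 1 ≤ N → ∀ g : (Fin N → Bool) → Bool,
      ∃ ℓ : Fin N, infl g ℓ ≥ c₀ * (muF g * (1 - muF g)) * Real.log N / N) :
    ∃ c : ℝ, 0 < c ∧ ∀ n : ℕ, ∀ f : (Fin n → Bool) → Bool, muF f = t →
      ∃ S : Finset (Fin n), (S.card : ℝ) ≤ a * n ∧ Jplus f S ≥ 1 - (n : ℝ) ^ (-c) := by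
  obtain ⟨c₀, hc₀, hkkl⟩ := hKKL
  obtain ⟨ha0, ha1⟩ := ha
  obtain ⟨ht0, ht1⟩ := ht
  set c₁ : ℝ := min c₀ 1 with hc₁def
  have hc₁0 : 0 < c₁ := lt_min hc₀ one_pos
  have hc₁1 : c₁ ≤ 1 := min_le_right _ _
  have hc₁c₀ : c₁ ≤ c₀ := min_le_left _ _
  set M : ℕ := ⌈(2:ℝ)/a⌉₊ + 2 with hMdef
  have hM2 : (2:ℝ) ≤ M := by
    have : (2:ℕ) ≤ M := by omega
    exact_mod_cast this
  have hMa : 2 / a ≤ (M:ℝ) := by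
    have h1 : (2:ℝ)/a ≤ ⌈(2:ℝ)/a⌉₊ := Nat.le_ceil _
    have h2 : ((⌈(2:ℝ)/a⌉₊ : ℝ)) ≤ M := by
      rw [hMdef]; push_cast; linarith
    linarith
  have hlogM : 0 < Real.log M := Real.log_pos (by linarith)
  have hlog1t : 0 < Real.log (1/(1-t)) := by
    apply Real.log_pos
    rw [one_div]
    exact one_lt_inv_iff₀.mpr ⟨by linarith, by linarith⟩
  set c : ℝ := min (c₁ * t * a / 8) (Real.log (1/(1-t)) / Real.log M) with hcdef
  have hc0 : 0 < c := lt_min (by positivity) (div_pos hlog1t hlogM)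
  refine ⟨c, hc0, ?_⟩
  intro n f hmu
  -- n = 0 is impossible
  rcases Nat.eq_zero_or_pos n with rfl | hn1
  · exfalso
    have hcard : (Finset.univ.filter fun x : Fin 0 → Bool => f x = true).card ≤ 1 := by
      have h := Finset.card_filter_le (Finset.univ : Finset (Fin 0 → Bool))
        (fun x => f x = true)
      simpa [card_cube] using h
    have h01 : muF f = 0 ∨ muF f = 1 := by
      unfold muF
      rcases Nat.le_one_iff_eq_zero_or_eq_one.mp hcard with h | h <;> rw [h] <;> simp
    rcases h01 with h | h <;> rw [hmu] at h <;> linarith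
  have hn1R : (1:ℝ) ≤ n := by exact_mod_cast hn1
  have hlogn0 : 0 ≤ Real.log n := Real.log_nonneg hn1R
  -- Case split on n < M or n ≥ M
  rcases lt_or_ge (n:ℝ) (M:ℝ) with hnM | hnM
  · -- small n: take S = ∅
    refine ⟨∅, by simpa using by positivity, ?_⟩
    rw [Jplus_empty, hmu]
    have hrw : (n:ℝ) ^ (-c) = Real.exp (Real.log n * (-c)) :=
      Real.rpow_def_of_pos (by linarith) _
    have hlognM : Real.log n ≤ Real.log M := Real.log_le_log (by linarith) hnM.le
    have hcM : c * Real.log M ≤ Real.log (1/(1-t)) := by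
      have : c ≤ Real.log (1/(1-t)) / Real.log M := min_le_right _ _
      calc c * Real.log M ≤ (Real.log (1/(1-t)) / Real.log M) * Real.log M := by
            apply mul_le_mul_of_nonneg_right this hlogM.le
        _ = Real.log (1/(1-t)) := div_mul_cancel₀ _ (ne_of_gt hlogM)
    have h1t : Real.exp (Real.log n * (-c)) ≥ 1 - t := by
      have hstep : Real.log (1-t) ≤ Real.log n * (-c) := by
        have : Real.log (1/(1-t)) = - Real.log (1-t) := by
          rw [one_div, Real.log_inv]
        nlinarith [mul_le_mul_of_nonneg_left hlognM hc0.le]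
      calc 1 - t = Real.exp (Real.log (1-t)) := (Real.exp_log (by linarith)).symm
        _ ≤ Real.exp (Real.log n * (-c)) := Real.exp_le_exp.mpr hstep
    rw [hrw]; linarith
  · -- main case : n ≥ M
    have hnpos : (0:ℝ) < n := by linarith
    set β : ℝ := c₁ * t * Real.log n / (2 * n) with hβdef
    have hβ0 : 0 ≤ β := by positivity
    have hβ1 : β ≤ 1 := by
      have hlog_le : Real.log n ≤ n := by
        have := Real.log_le_sub_one_of_pos hnpos
        linarith
      rw [hβdef, div_le_one (by positivity)]
      have hct : c₁ * t ≤ 1 := by nlinarith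
      have h2 : c₁ * t * Real.log n ≤ 1 * Real.log n :=
        mul_le_mul_of_nonneg_right hct hlogn0
      linarith
    -- the step lemma
    have hstep : ∀ S : Finset (Fin n), t ≤ Jplus f S →
        ∃ ℓ : Fin n, Jplus f (insert ℓ S) ≥ Jplus f S + β * (1 - Jplus f S) := by
      intro S hJt
      obtain ⟨ℓ, hℓ⟩ := hkkl n hn1 (gS f S)
      rw [muF_gS] at hℓ
      set J := Jplus f S with hJdef
      have hJ1 : J ≤ 1 := Jplus_le_one f S
      have hbound : infl (gS f S) ℓ ≥ 2 * β * (1 - J) := by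
        have hnum : c₁ * (t * (1 - J)) * Real.log n ≤ c₀ * (J * (1 - J)) * Real.log n := by
          have h1 : c₁ * t ≤ c₀ * J := mul_le_mul hc₁c₀ hJt ht0.le hc₀.le
          have h2 : c₁ * t * (1 - J) ≤ c₀ * J * (1 - J) :=
            mul_le_mul_of_nonneg_right h1 (by linarith)
          have h3 := mul_le_mul_of_nonneg_right h2 hlogn0
          calc c₁ * (t * (1 - J)) * Real.log n = c₁ * t * (1 - J) * Real.log n := by ring
            _ ≤ c₀ * J * (1 - J) * Real.log n := h3
            _ = c₀ * (J * (1 - J)) * Real.log n := by ring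
        have h1 : c₁ * (t * (1 - J)) * Real.log n / n ≤ c₀ * (J * (1 - J)) * Real.log n / n :=
          by gcongr
        have h2 : 2 * β * (1 - J) = c₁ * (t * (1 - J)) * Real.log n / n := by
          rw [hβdef]; field_simp
        linarith
      refine ⟨ℓ, ?_⟩
      rw [Jplus_insert]
      have : infl (gS f S) ℓ / 2 ≥ β * (1 - J) := by linarith
      linarith
    -- induction
    have hind : ∀ j : ℕ, ∃ S : Finset (Fin n), S.card ≤ j ∧ t ≤ Jplus f S ∧
        1 - Jplus f S ≤ (1 - t) * (1 - β) ^ j := by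
      intro j
      induction j with
      | zero => exact ⟨∅, by simp, by rw [Jplus_empty, hmu], by rw [Jplus_empty, hmu]; simp⟩
      | succ j ih =>
        obtain ⟨S, hcard, hJt, hJb⟩ := ih
        obtain ⟨ℓ, hℓ⟩ := hstep S hJt
        have hJ'1 : Jplus f (insert ℓ S) ≤ 1 := Jplus_le_one _ _
        have hJ1 : Jplus f S ≤ 1 := Jplus_le_one _ _
        refine ⟨insert ℓ S, le_trans (Finset.card_insert_le _ _) (by omega), ?_, ?_⟩
        · have h0 : 0 ≤ β * (1 - Jplus f S) := mul_nonneg hβ0 (by linarith)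
          linarith
        · have h1 : 1 - Jplus f (insert ℓ S) ≤ (1 - Jplus f S) * (1 - β) := by
            have hexp : (1 - Jplus f S) * (1 - β)
                = 1 - Jplus f S - β * (1 - Jplus f S) := by ring
            linarith
          calc 1 - Jplus f (insert ℓ S) ≤ (1 - Jplus f S) * (1 - β) := h1
            _ ≤ ((1 - t) * (1 - β) ^ j) * (1 - β) := by
                apply mul_le_mul_of_nonneg_right hJb (by linarith)
            _ = (1 - t) * (1 - β) ^ (j + 1) := by ring
    obtain ⟨S, hcard, hJt, hJb⟩ := hind ⌊a * n⌋₊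
    have han2 : (2:ℝ) ≤ a * n := by
      have := mul_le_mul_of_nonneg_left hnM ha0.le
      calc (2:ℝ) = a * (2/a) := by field_simp
        _ ≤ a * M := by apply mul_le_mul_of_nonneg_left hMa ha0.le
        _ ≤ a * n := this
    have hfloor_le : (⌊a * n⌋₊ : ℝ) ≤ a * n := Nat.floor_le (by positivity)
    have hfloor_ge : a * n - 1 ≤ (⌊a * n⌋₊ : ℝ) := by
      have := Nat.lt_floor_add_one (a * n)
      linarith
    refine ⟨S, le_trans (by exact_mod_cast hcard) hfloor_le, ?_⟩
    -- final estimate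
    have hexp : (1 - β) ^ ⌊a * n⌋₊ ≤ Real.exp (-(β * ⌊a * n⌋₊)) := by
      have h1 : 1 - β ≤ Real.exp (-β) := by
        have := Real.add_one_le_exp (-β)
        linarith
      calc (1 - β) ^ ⌊a * n⌋₊ ≤ (Real.exp (-β)) ^ ⌊a * n⌋₊ :=
            pow_le_pow_left₀ (by linarith) h1 _
        _ = Real.exp (-(β * ⌊a * n⌋₊)) := by
            rw [← Real.exp_nat_mul]; ring_nf
    have hβj : c * Real.log n ≤ β * ⌊a * n⌋₊ := by
      have hcle : c ≤ c₁ * t * a / 8 := min_le_left _ _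
      have hj2 : a * n / 2 ≤ (⌊a * n⌋₊ : ℝ) := by linarith
      have : β * (a * n / 2) ≤ β * ⌊a * n⌋₊ := mul_le_mul_of_nonneg_left hj2 hβ0
      have hβval : β * (a * n / 2) = (c₁ * t * a / 4) * Real.log n := by
        rw [hβdef]; field_simp; ring
      have h4 : c * Real.log n ≤ (c₁ * t * a / 8) * Real.log n :=
        mul_le_mul_of_nonneg_right hcle hlogn0
      have h5 : (c₁ * t * a / 8) * Real.log n ≤ (c₁ * t * a / 4) * Real.log n := by
        have h6 : (0:ℝ) ≤ c₁ * t * a := by positivity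
        have h7 : c₁ * t * a / 8 ≤ c₁ * t * a / 4 := by linarith
        exact mul_le_mul_of_nonneg_right h7 hlogn0
      linarith
    have hrw : (n:ℝ) ^ (-c) = Real.exp (Real.log n * (-c)) :=
      Real.rpow_def_of_pos hnpos _
    have hfinal : 1 - Jplus f S ≤ (n:ℝ) ^ (-c) := by
      calc 1 - Jplus f S ≤ (1 - t) * (1 - β) ^ ⌊a * n⌋₊ := hJb
        _ ≤ 1 * (1 - β) ^ ⌊a * n⌋₊ := by
            exact mul_le_mul_of_nonneg_right (by linarith) (pow_nonneg (by linarith) _)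
        _ = (1 - β) ^ ⌊a * n⌋₊ := one_mul _
        _ ≤ Real.exp (-(β * ⌊a * n⌋₊)) := hexp
        _ ≤ Real.exp (Real.log n * (-c)) := by
            apply Real.exp_le_exp.mpr
            have hneg : Real.log n * (-c) = -(c * Real.log n) := by ring
            rw [hneg]
            linarith
        _ = (n:ℝ) ^ (-c) := hrw.symm
    linarith
end

section
/- Let f = ∧_{i=1}^m C_i with independent uniformly random k-clauses. Suppose there is ξ > 0 with exp(−ξ²n) = o((1−2^{−k})^m) and ((1+2ξ)/4)^k = o(1/m). Then with high probability μ(f) = (1+o(1))·(1−2^{−k})^m. -/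
open Filter

/-- A random `k`-clause: a uniform `k`-subset `K` with a uniform sign pattern
(recorded on all of `[n]`; only the values on `K` matter). `x` satisfies the clause
iff it agrees with the signs in some coordinate of `K`. -/
def satClause {n k : ℕ} (c : {K : Finset (Fin n) // K.card = k} × (Fin n → Bool))
    (x : Fin n → Bool) : Prop :=
  ∃ j ∈ c.1.1, x j = c.2 j

instance {n k : ℕ} (c : {K : Finset (Fin n) // K.card = k} × (Fin n → Bool))
    (x : Fin n → Bool) : Decidable (satClause c x) := by
  unfold satClause; infer_instance

open Finset

lemma aux_sub_mul_le {a n k : ℕ} (h : a ≤ n) : (a - k) * n ≤ (n - k) * a := by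
  rcases le_or_gt k a with hk | hk
  · rw [Nat.sub_mul, Nat.sub_mul]
    have h1 : k * a ≤ k * n := Nat.mul_le_mul_left k h
    have h2 : a * n ≤ n * a := le_of_eq (Nat.mul_comm a n)
    have h3 : k * n ≤ a * n := Nat.mul_le_mul_right n hk
    omega
  · simp [Nat.sub_eq_zero_of_le hk.le]

lemma aux_descFactorial (n : ℕ) : ∀ k a : ℕ, a ≤ n →
    a.descFactorial k * n ^ k ≤ n.descFactorial k * a ^ k := by
  intro k
  induction k with
  | zero => simp
  | succ k ih =>
    intro a ha
    rw [Nat.descFactorial_succ, Nat.descFactorial_succ, pow_succ, pow_succ]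
    calc (a - k) * a.descFactorial k * (n ^ k * n)
        = ((a - k) * n) * (a.descFactorial k * n ^ k) := by ring
      _ ≤ ((n - k) * a) * (n.descFactorial k * a ^ k) :=
          Nat.mul_le_mul (aux_sub_mul_le ha) (ih a ha)
      _ = (n - k) * n.descFactorial k * (a ^ k * a) := by ring

lemma aux_choose_nat (n k a : ℕ) (h : a ≤ n) :
    a.choose k * n ^ k ≤ n.choose k * a ^ k := by
  have h1 := aux_descFactorial n k a h
  rw [Nat.descFactorial_eq_factorial_mul_choose, Nat.descFactorial_eq_factorial_mul_choose] at h1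
  have h2 : k.factorial * (a.choose k * n ^ k) ≤ k.factorial * (n.choose k * a ^ k) := by
    calc k.factorial * (a.choose k * n ^ k) = k.factorial * a.choose k * n ^ k := by ring
      _ ≤ k.factorial * n.choose k * a ^ k := h1
      _ = k.factorial * (n.choose k * a ^ k) := by ring
  exact Nat.le_of_mul_le_mul_left h2 (Nat.factorial_pos k)

/-- `C(a,k) ≤ C(n,k) c^k` when `a ≤ c n`. -/
lemma aux_choose_real {n k a : ℕ} {c : ℝ} (han : a ≤ n) (hc : 0 ≤ c) (h : (a : ℝ) ≤ c * n) :
    (a.choose k : ℝ) ≤ (n.choose k : ℝ) * c ^ k := by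
  rcases Nat.eq_zero_or_pos n with hn | hn
  · have ha0 : a = 0 := by omega
    subst ha0 hn
    rcases Nat.eq_zero_or_pos k with hk | hk
    · simp [hk]
    · simp [Nat.choose_eq_zero_of_lt (by omega : (0:ℕ) < k)]
  · have hn' : (0:ℝ) < (n:ℝ) := by exact_mod_cast hn
    have h1 : (a.choose k : ℝ) * (n:ℝ) ^ k ≤ (n.choose k : ℝ) * (a:ℝ) ^ k := by
      exact_mod_cast aux_choose_nat n k a han
    have h2 : (a:ℝ) ^ k ≤ (c * n) ^ k := by
      apply pow_le_pow_left₀ (by positivity) h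
    have hnk : (0:ℝ) < (n:ℝ) ^ k := by positivity
    calc (a.choose k : ℝ) = (a.choose k : ℝ) * (n:ℝ)^k / (n:ℝ)^k := by field_simp
      _ ≤ (n.choose k : ℝ) * (a:ℝ)^k / (n:ℝ)^k := by gcongr
      _ ≤ (n.choose k : ℝ) * (c*n)^k / (n:ℝ)^k := by gcongr
      _ = (n.choose k : ℝ) * c^k := by rw [mul_pow]; field_simp

lemma aux_chernoff (n : ℕ) (ξ : ℝ) (hξ : 0 < ξ) :
    ∑ j ∈ Finset.range (n+1),
      (if (j:ℝ) ≤ ((1:ℝ)/2 - ξ) * n then (n.choose j : ℝ) else 0)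
      ≤ 2 ^ n * Real.exp (-ξ^2 * n) := by
  set t : ℝ := Real.exp (-(4*ξ)) with ht
  have ht0 : 0 < t := Real.exp_pos _
  have key : ∀ j ∈ Finset.range (n+1),
      (if (j:ℝ) ≤ ((1:ℝ)/2 - ξ) * n then (n.choose j : ℝ) else 0)
        ≤ Real.exp (4*ξ*(((1:ℝ)/2 - ξ)*n)) * (t ^ j * (n.choose j : ℝ)) := by
    intro j _
    have hexp : Real.exp (4*ξ*(((1:ℝ)/2 - ξ)*n)) * t ^ j
        = Real.exp (4*ξ*(((1:ℝ)/2 - ξ)*n - j)) := by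
      rw [ht, ← Real.exp_nat_mul, ← Real.exp_add]
      ring_nf
    split_ifs with hj
    · have h1 : (1:ℝ) ≤ Real.exp (4*ξ*(((1:ℝ)/2 - ξ)*n - j)) := by
        rw [Real.one_le_exp_iff]
        have : (0:ℝ) ≤ ((1:ℝ)/2 - ξ)*n - j := by linarith
        positivity
      calc (n.choose j : ℝ) = 1 * (n.choose j : ℝ) := by ring
        _ ≤ Real.exp (4*ξ*(((1:ℝ)/2 - ξ)*n - j)) * (n.choose j : ℝ) := by
            apply mul_le_mul_of_nonneg_right h1 (by positivity)
        _ = Real.exp (4*ξ*(((1:ℝ)/2 - ξ)*n)) * (t ^ j * (n.choose j : ℝ)) := by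
            rw [← hexp]; ring
    · positivity
  calc ∑ j ∈ Finset.range (n+1), (if (j:ℝ) ≤ ((1:ℝ)/2 - ξ) * n then (n.choose j : ℝ) else 0)
      ≤ ∑ j ∈ Finset.range (n+1),
          Real.exp (4*ξ*(((1:ℝ)/2 - ξ)*n)) * (t ^ j * (n.choose j : ℝ)) :=
        Finset.sum_le_sum key
    _ = Real.exp (4*ξ*(((1:ℝ)/2 - ξ)*n)) * (t + 1) ^ n := by
        rw [← Finset.mul_sum, add_pow]
        simp
    _ ≤ 2 ^ n * Real.exp (-ξ^2 * n) := by
        have hbase : Real.exp (4*ξ*((1:ℝ)/2 - ξ)) * (t + 1) ≤ 2 * Real.exp (-ξ^2) := by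
          have hcosh := Real.cosh_le_exp_half_sq (2*ξ)
          rw [Real.cosh_eq] at hcosh
          have h1 : Real.exp (2*ξ) + Real.exp (-(2*ξ)) ≤ 2 * Real.exp ((2*ξ)^2/2) := by
            nlinarith [Real.exp_pos ((2*ξ)^2/2)]
          have h2 : Real.exp (4*ξ*((1:ℝ)/2 - ξ)) * (t + 1)
              = (Real.exp (2*ξ) + Real.exp (-(2*ξ))) * Real.exp (-(4*ξ^2)) := by
            rw [ht, mul_add, ← Real.exp_add, mul_one, add_mul, ← Real.exp_add, ← Real.exp_add]
            ring_nf
          rw [h2]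
          have h3 : (Real.exp (2*ξ) + Real.exp (-(2*ξ))) * Real.exp (-(4*ξ^2))
              ≤ 2 * Real.exp ((2*ξ)^2/2) * Real.exp (-(4*ξ^2)) :=
            mul_le_mul_of_nonneg_right h1 (Real.exp_pos _).le
          have h4 : 2 * Real.exp ((2*ξ)^2/2) * Real.exp (-(4*ξ^2)) = 2 * Real.exp (-(2*ξ^2)) := by
            rw [mul_assoc, ← Real.exp_add]; ring_nf
          have h5 : Real.exp (-(2*ξ^2)) ≤ Real.exp (-ξ^2) := by
            apply Real.exp_le_exp.2; nlinarith
          linarith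
        calc Real.exp (4*ξ*(((1:ℝ)/2 - ξ)*n)) * (t + 1) ^ n
            = (Real.exp (4*ξ*((1:ℝ)/2 - ξ)) * (t + 1)) ^ n := by
              rw [mul_pow, ← Real.exp_nat_mul]; ring_nf
          _ ≤ (2 * Real.exp (-ξ^2)) ^ n := by
              apply pow_le_pow_left₀ (by positivity) hbase
          _ = 2 ^ n * Real.exp (-ξ^2 * n) := by
              rw [mul_pow, ← Real.exp_nat_mul]; ring_nf

lemma card_pi_filter {α : Type*} [Fintype α] [DecidableEq α] (m : ℕ) (P : α → Prop)
    [DecidablePred P] :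
    (univ.filter fun ω : Fin m → α => ∀ i, P (ω i)).card = (univ.filter P).card ^ m := by
  classical
  rw [← Fintype.card_subtype, ← Fintype.card_subtype]
  rw [Fintype.card_congr (Equiv.subtypePiEquivPi (p := fun _ a => P a))]
  simp

lemma card_fixed_on {n : ℕ} (K : Finset (Fin n)) (g : Fin n → Bool) :
    (univ.filter fun b : Fin n → Bool => ∀ j ∈ K, b j = g j).card = 2 ^ (n - K.card) := by
  classical
  rw [← Fintype.card_subtype]
  rw [Fintype.card_congr (Equiv.subtypePiEquivPi (p := fun j v => j ∈ K → v = g j))]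
  rw [Fintype.card_pi]
  have h1 : ∀ j : Fin n, Fintype.card {v : Bool // j ∈ K → v = g j}
      = if j ∈ K then 1 else 2 := by
    intro j
    by_cases h : j ∈ K <;> simp [h, Fintype.card_subtype]
  rw [Finset.prod_congr rfl (fun j _ => h1 j), Finset.prod_ite, Finset.prod_const,
    Finset.prod_const, one_pow, one_mul]
  congr 1
  have h2 : univ.filter (fun j : Fin n => j ∈ K) = K := by ext j; simp
  have h3 := Finset.card_filter_add_card_filter_not
    (s := (univ : Finset (Fin n))) (p := fun j => j ∈ K)
  rw [h2] at h3
  simp only [Finset.card_univ, Fintype.card_fin] at h3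
  omega

lemma card_unsat_pair {n k : ℕ} (x y : Fin n → Bool) :
    (univ.filter fun c : {K : Finset (Fin n) // K.card = k} × (Fin n → Bool) =>
        ¬satClause c x ∧ ¬satClause c y).card
      = (univ.filter fun j => x j = y j).card.choose k * 2 ^ (n - k) := by
  classical
  set A : Finset (Fin n) := univ.filter fun j => x j = y j with hA
  have hiff : ∀ c : {K : Finset (Fin n) // K.card = k} × (Fin n → Bool),
      (¬satClause c x ∧ ¬satClause c y) ↔
        (c.1.1 ⊆ A ∧ ∀ j ∈ c.1.1, c.2 j = !(x j)) := by
    rintro ⟨⟨K, hK⟩, b⟩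
    simp only [satClause, not_exists, not_and, Finset.subset_iff, hA, Finset.mem_filter,
      Finset.mem_univ, true_and]
    constructor
    · rintro ⟨h1, h2⟩
      push_neg at h1 h2
      have hb : ∀ j ∈ K, b j = !(x j) := by
        intro j hj
        have hb1 := h1 j hj
        revert hb1; cases x j <;> cases b j <;> simp
      have hxy : ∀ j ∈ K, x j = y j := by
        intro j hj
        have hb1 := h1 j hj
        have hb2 := h2 j hj
        revert hb1 hb2; cases x j <;> cases y j <;> cases b j <;> simp
      exact ⟨fun j hj => hxy j hj, hb⟩
    · rintro ⟨h1, h2⟩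
      refine ⟨fun j hj => ?_, fun j hj => ?_⟩
      · have hbj := h2 j hj
        revert hbj; cases x j <;> cases b j <;> simp
      · have hxy := h1 hj
        have hbj := h2 j hj
        revert hxy hbj; cases x j <;> cases y j <;> cases b j <;> simp
  rw [Finset.filter_congr (fun c _ => by rw [hiff c])]
  rw [Finset.card_filter]
  rw [Fintype.sum_prod_type]
  have hinner : ∀ K' : {K : Finset (Fin n) // K.card = k},
      (∑ b : Fin n → Bool, if K'.1 ⊆ A ∧ ∀ j ∈ K'.1, b j = !(x j) then 1 else 0)
        = if K'.1 ⊆ A then 2 ^ (n - k) else 0 := by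
    intro K'
    by_cases hsub : K'.1 ⊆ A
    · simp only [hsub, true_and, if_true]
      rw [← Finset.card_filter]
      rw [card_fixed_on K'.1 (fun j => !(x j)), K'.2]
    · simp [hsub]
  rw [Finset.sum_congr rfl (fun K' _ => hinner K')]
  rw [Finset.sum_ite, Finset.sum_const, Finset.sum_const]
  simp only [smul_eq_mul, mul_zero, add_zero]
  congr 1
  rw [← Finset.card_powersetCard k A]
  apply Finset.card_bij (fun K' _ => K'.1)
  · intro K' hK'
    simp only [Finset.mem_filter] at hK'
    exact Finset.mem_powersetCard.2 ⟨hK'.2, K'.2⟩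
  · intro a ha b hb hab
    exact Subtype.ext hab
  · intro S hS
    obtain ⟨hS1, hS2⟩ := Finset.mem_powersetCard.1 hS
    exact ⟨⟨S, hS2⟩, by simp [hS1], rfl⟩

lemma card_unsat_single {n k : ℕ} (x : Fin n → Bool) :
    (univ.filter fun c : {K : Finset (Fin n) // K.card = k} × (Fin n → Bool) =>
        ¬satClause c x).card = n.choose k * 2 ^ (n - k) := by
  classical
  have hiff : ∀ c : {K : Finset (Fin n) // K.card = k} × (Fin n → Bool),
      (¬satClause c x) ↔ (∀ j ∈ c.1.1, c.2 j = !(x j)) := by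
    rintro ⟨⟨K, hK⟩, b⟩
    simp only [satClause, not_exists, not_and]
    constructor
    · intro h1 j hj
      have hb1 := h1 j hj
      revert hb1; cases x j <;> cases b j <;> simp
    · intro h2 j hj
      have hbj := h2 j hj
      revert hbj; cases x j <;> cases b j <;> simp
  rw [Finset.filter_congr (fun c _ => by rw [hiff c])]
  rw [Finset.card_filter, Fintype.sum_prod_type]
  have hinner : ∀ K' : {K : Finset (Fin n) // K.card = k},
      (∑ b : Fin n → Bool, if ∀ j ∈ K'.1, b j = !(x j) then 1 else 0) = 2 ^ (n - k) := by
    intro K'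
    rw [← Finset.card_filter, card_fixed_on K'.1 (fun j => !(x j)), K'.2]
  rw [Finset.sum_congr rfl (fun K' _ => hinner K'), Finset.sum_const]
  simp only [smul_eq_mul, Finset.card_univ]
  congr 1
  rw [Fintype.card_finset_len, Fintype.card_fin]

lemma card_dist_eq {n : ℕ} (x : Fin n → Bool) (j : ℕ) :
    (univ.filter fun y : Fin n → Bool => (univ.filter fun i => ¬(x i = y i)).card = j).card
      = n.choose j := by
  classical
  have h : n.choose j = (Finset.powersetCard j (univ : Finset (Fin n))).card := by
    rw [Finset.card_powersetCard, Finset.card_univ, Fintype.card_fin]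
  rw [h]
  apply Finset.card_nbij' (i := fun y => univ.filter fun i => ¬(x i = y i))
    (j := fun S => fun i => if i ∈ S then !(x i) else x i)
  · intro y hy
    simp only [Finset.mem_coe, Finset.mem_filter, Finset.mem_univ, true_and] at hy
    exact Finset.mem_powersetCard.2 ⟨Finset.filter_subset _ _, hy⟩
  · intro S hS
    obtain ⟨hS1, hS2⟩ := Finset.mem_powersetCard.1 hS
    simp only [Finset.mem_coe, Finset.mem_filter, Finset.mem_univ, true_and]
    rw [← hS2]
    congr 1
    ext i
    simp only [Finset.mem_filter, Finset.mem_univ, true_and]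
    by_cases hi : i ∈ S
    · simp only [hi, if_pos, iff_true]
      cases x i <;> simp [hi]
    · simp only [hi, if_neg, iff_false]
      simp [hi]
  · intro y hy
    funext i
    by_cases hmem : i ∈ (univ.filter fun i => ¬(x i = y i))
    · simp only [Finset.mem_filter, Finset.mem_univ, true_and] at hmem
      simp only [Finset.mem_filter, Finset.mem_univ, true_and, hmem, if_pos]
      revert hmem; cases x i <;> cases y i <;> simp
    · simp only [Finset.mem_filter, Finset.mem_univ, true_and] at hmem
      simp only [Finset.mem_filter, Finset.mem_univ, true_and, hmem, if_neg]
      push_neg at hmem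
      simp [hmem]
  · intro S hS
    ext i
    simp only [Finset.mem_filter, Finset.mem_univ, true_and]
    by_cases hi : i ∈ S
    · simp only [hi, if_pos, iff_true]
      cases x i <;> simp [hi]
    · simp only [hi, if_neg, iff_false]
      simp [hi]

lemma card_far_eq {n : ℕ} (x : Fin n → Bool) (c : ℝ) :
    (univ.filter fun y : Fin n → Bool =>
        ((univ.filter fun i => ¬(x i = y i)).card : ℝ) ≤ c).card
      = ∑ j ∈ Finset.range (n+1), (if (j:ℝ) ≤ c then n.choose j else 0) := by
  classical
  have hmem : ∀ y ∈ (univ.filter fun y : Fin n → Bool =>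
      ((univ.filter fun i => ¬(x i = y i)).card : ℝ) ≤ c),
      (univ.filter fun i => ¬(x i = y i)).card ∈ Finset.range (n+1) := by
    intro y hy
    rw [Finset.mem_range]
    have h : (univ.filter fun i => ¬(x i = y i)).card ≤ n :=
      le_trans (Finset.card_filter_le _ _) (by simp)
    omega
  rw [Finset.card_eq_sum_card_fiberwise hmem]
  apply Finset.sum_congr rfl
  intro j hj
  by_cases hc : (j:ℝ) ≤ c
  · rw [if_pos hc, ← card_dist_eq x j]
    congr 1
    ext y
    simp only [Finset.mem_filter, Finset.mem_univ, true_and]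
    constructor
    · rintro ⟨h1, h2⟩; exact h2
    · intro h2; exact ⟨by rw [h2]; exact hc, h2⟩
  · rw [if_neg hc]
    rw [Finset.card_eq_zero, Finset.eq_empty_iff_forall_notMem]
    intro y hy
    simp only [Finset.mem_filter, Finset.mem_univ, true_and] at hy
    obtain ⟨h1, h2⟩ := hy
    rw [h2] at h1
    exact hc h1

lemma sum_pow_card {α β : Type*} [Fintype α] [Fintype β] (m : ℕ) (R : β → α → Prop)
    [∀ b a, Decidable (R b a)] :
    ∑ ω : Fin m → α, (univ.filter fun b : β => ∀ i, R b (ω i)).card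
      = ∑ b : β, (univ.filter fun a : α => R b a).card ^ m := by
  classical
  simp only [Finset.card_filter]
  rw [Finset.sum_comm]
  refine Finset.sum_congr rfl fun b _ => ?_
  rw [← Finset.card_filter, card_pi_filter m (fun a => R b a), Finset.card_filter]

lemma sum_sq_pow_card {α β : Type*} [Fintype α] [Fintype β] (m : ℕ) (R : β → α → Prop)
    [∀ b a, Decidable (R b a)] :
    ∑ ω : Fin m → α, ((univ.filter fun b : β => ∀ i, R b (ω i)).card) ^ 2
      = ∑ b : β, ∑ b' : β, (univ.filter fun a : α => R b a ∧ R b' a).card ^ m := by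
  classical
  have hsq : ∀ ω : Fin m → α,
      ((univ.filter fun b : β => ∀ i, R b (ω i)).card) ^ 2
        = ∑ b : β, ∑ b' : β, if (∀ i, R b (ω i) ∧ R b' (ω i)) then 1 else 0 := by
    intro ω
    rw [Finset.card_filter, sq, Finset.sum_mul_sum]
    refine Finset.sum_congr rfl fun b _ => Finset.sum_congr rfl fun b' _ => ?_
    rw [ite_zero_mul_ite_zero]
    congr 1
    simp [forall_and]
  rw [Finset.sum_congr rfl fun ω _ => hsq ω]
  rw [Finset.sum_comm]
  refine Finset.sum_congr rfl fun b _ => ?_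
  rw [Finset.sum_comm]
  refine Finset.sum_congr rfl fun b' _ => ?_
  rw [← Finset.card_filter, card_pi_filter m (fun a => R b a ∧ R b' a), Finset.card_filter]

lemma chebyshev_count {Ω : Type*} [Fintype Ω] (g : Ω → ℝ) (b t : ℝ) (ht : 0 < t) :
    ((univ.filter fun ω => ¬(|g ω - b| ≤ t)).card : ℝ) * t ^ 2
      ≤ ∑ ω : Ω, (g ω - b) ^ 2 := by
  classical
  calc ((univ.filter fun ω => ¬(|g ω - b| ≤ t)).card : ℝ) * t ^ 2
      = ∑ _ω ∈ univ.filter fun ω => ¬(|g ω - b| ≤ t), t ^ 2 := by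
        rw [Finset.sum_const, nsmul_eq_mul]
    _ ≤ ∑ ω ∈ univ.filter fun ω => ¬(|g ω - b| ≤ t), (g ω - b) ^ 2 := by
        apply Finset.sum_le_sum
        intro ω hω
        rw [Finset.mem_filter] at hω
        have h1 : t ≤ |g ω - b| := le_of_not_ge hω.2
        calc t ^ 2 ≤ |g ω - b| ^ 2 := by
              apply pow_le_pow_left₀ ht.le h1
          _ = (g ω - b) ^ 2 := sq_abs _
    _ ≤ ∑ ω : Ω, (g ω - b) ^ 2 := by
        apply Finset.sum_le_sum_of_subset_of_nonneg (Finset.filter_subset _ _)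
        intro ω _ _
        positivity

lemma aux_main_ineq (i u E : ℝ) (hi0 : 0 < i) (hi2 : i ≤ 1/2) (hu0 : 0 ≤ u)
    (hexp : 1 + 4*u ≤ E) :
    1 - 2*i + u ≤ (1 - i)^2 * E := by
  have h7 : (1 - i)^2 * (1 + 4*u) ≤ (1 - i)^2 * E :=
    mul_le_mul_of_nonneg_left hexp (sq_nonneg _)
  nlinarith [h7, sq_nonneg i,
    mul_nonneg hu0 (mul_nonneg (by linarith : (0:ℝ) ≤ 1 - 2*i)
      (by linarith : (0:ℝ) ≤ 3 - 2*i))]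

abbrev Clause (n k : ℕ) := {K : Finset (Fin n) // K.card = k} × (Fin n → Bool)

open scoped Classical in
set_option maxHeartbeats 1000000 in
lemma fraction_lower (n k m : ℕ) (hk1 : 1 ≤ k) (hkn : k ≤ n) (ξ ε : ℝ) (hξ : 0 < ξ)
    (hε : 0 < ε) :
    1 - (Real.exp (4 * ((1 + 2 * ξ) / 4) ^ k * m) - 1
          + Real.exp (-ξ ^ 2 * n) / (1 - (2 : ℝ) ^ (-(k : ℤ))) ^ m) / ε ^ 2
      ≤ (((Finset.univ :
              Finset (Fin m → ({K : Finset (Fin n) // K.card = k} × (Fin n → Bool)))).filter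
            (fun ω =>
              |muF (fun x : Fin n → Bool => decide (∀ i, satClause (ω i) x))
                  - (1 - (2 : ℝ) ^ (-(k : ℤ))) ^ m|
                ≤ ε * (1 - (2 : ℝ) ^ (-(k : ℤ))) ^ m)).card : ℝ)
          / (Fintype.card
              (Fin m → ({K : Finset (Fin n) // K.card = k} × (Fin n → Bool))) : ℝ) := by
  have hn : 1 ≤ n := le_trans hk1 hkn
  set p : ℝ := 1 - (2 : ℝ) ^ (-(k : ℤ)) with hp
  set u : ℝ := ((1 + 2 * ξ) / 4) ^ k with hu
  set T : ℝ := (n.choose k : ℝ) * 2 ^ n with hT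
  have hpinv : (2 : ℝ) ^ (-(k : ℤ)) = ((2 : ℝ) ^ k)⁻¹ := by
    rw [zpow_neg, zpow_natCast]
  have h2k : (2 : ℝ) ≤ (2 : ℝ) ^ k := by
    calc (2 : ℝ) = 2 ^ 1 := (pow_one 2).symm
      _ ≤ 2 ^ k := pow_le_pow_right₀ one_le_two hk1
  have h2k0 : (0 : ℝ) < (2 : ℝ) ^ k := by positivity
  have hpi : p = 1 - ((2 : ℝ) ^ k)⁻¹ := by rw [hp, hpinv]
  have hph : (1 : ℝ) / 2 ≤ p := by
    rw [hpi]
    have h := one_div_le_one_div_of_le (by norm_num : (0:ℝ) < 2) h2k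
    rw [one_div] at h
    linarith
  have hp0 : 0 < p := lt_of_lt_of_le (by norm_num) hph
  have hp1 : p ≤ 1 := by
    rw [hpi]
    have : (0:ℝ) < ((2:ℝ)^k)⁻¹ := by positivity
    linarith
  have hu0 : (0 : ℝ) ≤ u := by rw [hu]; positivity
  have hN0 : (0:ℝ) < (n.choose k : ℝ) := by exact_mod_cast Nat.choose_pos hkn
  have hT0 : (0 : ℝ) < T := by rw [hT]; positivity
  clear_value p u T
  have cardCl : Fintype.card (Clause n k) = n.choose k * 2 ^ n := by
    rw [Fintype.card_prod, Fintype.card_finset_len, Fintype.card_fin]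
    congr 1
    simp [Fintype.card_fun]
  have h2nk : ((2 : ℝ) ^ (n - k)) * (2 : ℝ) ^ k = 2 ^ n := by
    rw [← pow_add]
    congr 1
    omega
  have h2nk' : (2:ℝ) ^ (n - k) = 2 ^ n * ((2:ℝ) ^ k)⁻¹ := by
    rw [← h2nk]
    field_simp
  have hQT : (n.choose k : ℝ) * 2 ^ (n - k) = T * ((2 : ℝ) ^ k)⁻¹ := by
    rw [hT, h2nk']
    ring
  set s2 : (Fin n → Bool) → (Fin n → Bool) → ℕ := fun x y =>
    (univ.filter fun c : Clause n k => satClause c x ∧ satClause c y).card with hs2def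
  set agr : (Fin n → Bool) → (Fin n → Bool) → ℕ := fun x y =>
    (univ.filter fun j => x j = y j).card with hagr
  have hagr_le : ∀ x y, agr x y ≤ n := by
    intro x y
    rw [hagr]
    exact le_trans (Finset.card_filter_le _ _) (by simp)
  have hs2 : ∀ x y : Fin n → Bool,
      (s2 x y : ℝ) = T - 2 * ((n.choose k : ℝ) * 2 ^ (n - k))
        + ((agr x y).choose k : ℝ) * 2 ^ (n - k) := by
    intro x y
    have h1 := Finset.card_filter_add_card_filter_not
      (s := (univ : Finset (Clause n k))) (p := fun c => satClause c x ∧ satClause c y)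
    have hnot : (univ.filter fun c : Clause n k => ¬(satClause c x ∧ satClause c y))
        = (univ.filter fun c : Clause n k => ¬satClause c x) ∪
            (univ.filter fun c : Clause n k => ¬satClause c y) := by
      rw [← Finset.filter_or]
      apply Finset.filter_congr
      intro c _
      tauto
    rw [hnot, Finset.card_univ, cardCl] at h1
    have h2 := Finset.card_union_add_card_inter
      (univ.filter fun c : Clause n k => ¬satClause c x)
      (univ.filter fun c : Clause n k => ¬satClause c y)
    rw [← Finset.filter_and, card_unsat_single x, card_unsat_single y,
      card_unsat_pair x y] at h2
    have h1' : (s2 x y : ℝ)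
        + (((univ.filter fun c : Clause n k => ¬satClause c x) ∪
            (univ.filter fun c : Clause n k => ¬satClause c y)).card : ℝ)
        = (n.choose k : ℝ) * 2 ^ n := by exact_mod_cast h1
    have h2' : (((univ.filter fun c : Clause n k => ¬satClause c x) ∪
            (univ.filter fun c : Clause n k => ¬satClause c y)).card : ℝ)
        + ((agr x y).choose k : ℝ) * 2 ^ (n - k)
        = (n.choose k : ℝ) * 2 ^ (n - k) + (n.choose k : ℝ) * 2 ^ (n - k) := by
      exact_mod_cast h2
    rw [hT]
    linarith
  have hcase2 : ∀ x y : Fin n → Bool, (s2 x y : ℝ) ≤ T * p := by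
    intro x y
    rw [hs2 x y]
    have hW : ((agr x y).choose k : ℝ) ≤ (n.choose k : ℝ) := by
      exact_mod_cast Nat.choose_le_choose k (hagr_le x y)
    have hW2 : ((agr x y).choose k : ℝ) * 2 ^ (n - k) ≤ (n.choose k : ℝ) * 2 ^ (n - k) := by
      apply mul_le_mul_of_nonneg_right hW (by positivity)
    have hTp : T * p = T - T * ((2 : ℝ) ^ k)⁻¹ := by rw [hpi]; ring
    rw [hTp, ← hQT]
    linarith
  have hcase1 : ∀ x y : Fin n → Bool, ((agr x y : ℝ) ≤ (1 + 2 * ξ) / 2 * n) →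
      (s2 x y : ℝ) ≤ T * (p ^ 2 * Real.exp (4 * u)) := by
    intro x y hxy
    have hc0 : (0:ℝ) ≤ (1 + 2 * ξ) / 2 := by linarith
    have hch := aux_choose_real (k := k) (hagr_le x y) hc0 hxy
    have hch2 : ((agr x y).choose k : ℝ) * 2 ^ (n - k)
        ≤ (n.choose k : ℝ) * ((1 + 2 * ξ) / 2) ^ k * 2 ^ (n - k) := by
      apply mul_le_mul_of_nonneg_right hch (by positivity)
    have hkey : (n.choose k : ℝ) * ((1 + 2 * ξ) / 2) ^ k * 2 ^ (n - k) = T * u := by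
      have h4 : u = ((1 + 2 * ξ) / 2) ^ k * ((2:ℝ) ^ k)⁻¹ := by
        rw [hu, ← inv_pow, ← mul_pow]
        congr 1
        ring
      rw [h4, hT, h2nk']
      ring
    have hexp : 1 + 4 * u ≤ Real.exp (4 * u) := by
      have := Real.add_one_le_exp (4 * u)
      linarith
    have hi0 : (0:ℝ) < ((2:ℝ)^k)⁻¹ := by positivity
    have hi2 : ((2:ℝ)^k)⁻¹ ≤ 1 / 2 := by
      rw [hpi] at hph
      linarith
    have hmain : 1 - 2 * ((2:ℝ)^k)⁻¹ + u ≤ p ^ 2 * Real.exp (4 * u) := by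
      rw [hpi]
      exact aux_main_ineq _ _ _ hi0 hi2 hu0 hexp
    have hWu : ((agr x y).choose k : ℝ) * 2 ^ (n - k) ≤ T * u := by
      rw [← hkey]; exact hch2
    rw [hs2 x y, hQT]
    calc T - 2 * (T * ((2:ℝ)^k)⁻¹) + ((agr x y).choose k : ℝ) * 2 ^ (n - k)
        ≤ T - 2 * (T * ((2:ℝ)^k)⁻¹) + T * u := by linarith
      _ = T * (1 - 2 * ((2:ℝ)^k)⁻¹ + u) := by ring
      _ ≤ T * (p ^ 2 * Real.exp (4 * u)) := mul_le_mul_of_nonneg_left hmain hT0.le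
  have hs1 : ∀ x : Fin n → Bool,
      ((univ.filter fun c : Clause n k => satClause c x).card : ℝ) = T * p := by
    intro x
    have h1 := Finset.card_filter_add_card_filter_not
      (s := (univ : Finset (Clause n k))) (p := fun c => satClause c x)
    rw [Finset.card_univ, cardCl, card_unsat_single x] at h1
    have h1' : ((univ.filter fun c : Clause n k => satClause c x).card : ℝ)
        + (n.choose k : ℝ) * 2 ^ (n - k) = (n.choose k : ℝ) * 2 ^ n := by exact_mod_cast h1
    have hTp : T * p = T - T * ((2 : ℝ) ^ k)⁻¹ := by rw [hpi]; ring
    rw [hTp, ← hQT, hT]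
    linarith
  set g : (Fin m → Clause n k) → ℝ := fun ω =>
    ((univ.filter fun x : Fin n → Bool => ∀ i, satClause (ω i) x).card : ℝ) / 2 ^ n with hg
  clear_value g
  have hA1 : ∑ ω : Fin m → Clause n k,
      ((univ.filter fun x : Fin n → Bool => ∀ i, satClause (ω i) x).card : ℝ)
      = 2 ^ n * (T * p) ^ m := by
    have hnat := sum_pow_card (α := Clause n k) (β := Fin n → Bool) m
      (fun x c => satClause c x)
    have hcast : (∑ ω : Fin m → Clause n k,
        ((univ.filter fun x : Fin n → Bool => ∀ i, satClause (ω i) x).card : ℝ))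
        = ∑ x : Fin n → Bool,
            (((univ.filter fun c : Clause n k => satClause c x).card : ℝ)) ^ m := by
      exact_mod_cast congrArg (Nat.cast : ℕ → ℝ) hnat
    rw [hcast, Finset.sum_congr rfl (fun x _ => by rw [hs1 x]), Finset.sum_const,
      Finset.card_univ, nsmul_eq_mul]
    congr 1
    simp [Fintype.card_fun]
  have hA2 : ∑ ω : Fin m → Clause n k,
      ((univ.filter fun x : Fin n → Bool => ∀ i, satClause (ω i) x).card : ℝ) ^ 2
      = ∑ x : Fin n → Bool, ∑ y : Fin n → Bool, (s2 x y : ℝ) ^ m := by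
    have hnat := sum_sq_pow_card (α := Clause n k) (β := Fin n → Bool) m
      (fun x c => satClause c x)
    exact_mod_cast congrArg (Nat.cast : ℕ → ℝ) hnat
  have hfar : ∀ x : Fin n → Bool,
      ((univ.filter fun y : Fin n → Bool =>
          ¬((agr x y : ℝ) ≤ (1 + 2 * ξ) / 2 * n)).card : ℝ)
        ≤ 2 ^ n * Real.exp (-ξ ^ 2 * n) := by
    intro x
    have hsub : (univ.filter fun y : Fin n → Bool => ¬((agr x y : ℝ) ≤ (1 + 2 * ξ) / 2 * n))
        ⊆ (univ.filter fun y : Fin n → Bool =>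
            ((univ.filter fun i => ¬(x i = y i)).card : ℝ) ≤ ((1:ℝ)/2 - ξ) * n) := by
      intro y hy
      simp only [Finset.mem_filter, Finset.mem_univ, true_and] at hy ⊢
      push_neg at hy
      have hsum : agr x y + (univ.filter fun i => ¬(x i = y i)).card = n := by
        rw [hagr]
        have h := Finset.card_filter_add_card_filter_not
          (s := (univ : Finset (Fin n))) (p := fun i => x i = y i)
        simpa using h
      have hdis : ((univ.filter fun i => ¬(x i = y i)).card : ℝ) = (n : ℝ) - (agr x y : ℝ) := by
        have : ((agr x y : ℝ)) + ((univ.filter fun i => ¬(x i = y i)).card : ℝ) = (n:ℝ) := by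
          exact_mod_cast hsum
        linarith
      rw [hdis]
      linarith
    calc ((univ.filter fun y : Fin n → Bool =>
          ¬((agr x y : ℝ) ≤ (1 + 2 * ξ) / 2 * n)).card : ℝ)
        ≤ ((univ.filter fun y : Fin n → Bool =>
            ((univ.filter fun i => ¬(x i = y i)).card : ℝ) ≤ ((1:ℝ)/2 - ξ) * n).card : ℝ) := by
          exact_mod_cast Finset.card_le_card hsub
      _ = ∑ j ∈ Finset.range (n+1), (if (j:ℝ) ≤ ((1:ℝ)/2 - ξ) * n then (n.choose j : ℝ) else 0) := by
          rw [card_far_eq x (((1:ℝ)/2 - ξ) * n)]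
          push_cast
          exact Finset.sum_congr rfl fun j _ => by split_ifs <;> simp
      _ ≤ 2 ^ n * Real.exp (-ξ ^ 2 * n) := aux_chernoff n ξ hξ
  have hA2bound : ∑ x : Fin n → Bool, ∑ y : Fin n → Bool, (s2 x y : ℝ) ^ m
      ≤ 2 ^ n * (2 ^ n * (T * (p ^ 2 * Real.exp (4 * u))) ^ m
          + (2 ^ n * Real.exp (-ξ ^ 2 * n)) * (T * p) ^ m) := by
    have hx : ∀ x : Fin n → Bool, ∑ y : Fin n → Bool, (s2 x y : ℝ) ^ m
        ≤ 2 ^ n * (T * (p ^ 2 * Real.exp (4 * u))) ^ m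
          + (2 ^ n * Real.exp (-ξ ^ 2 * n)) * (T * p) ^ m := by
      intro x
      have hstep : ∀ y : Fin n → Bool, (s2 x y : ℝ) ^ m ≤
          if ((agr x y : ℝ) ≤ (1 + 2 * ξ) / 2 * n)
            then (T * (p ^ 2 * Real.exp (4 * u))) ^ m else (T * p) ^ m := by
        intro y
        split_ifs with hcond
        · exact pow_le_pow_left₀ (Nat.cast_nonneg _) (hcase1 x y hcond) m
        · exact pow_le_pow_left₀ (Nat.cast_nonneg _) (hcase2 x y) m
      calc ∑ y : Fin n → Bool, (s2 x y : ℝ) ^ m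
          ≤ ∑ y : Fin n → Bool, (if ((agr x y : ℝ) ≤ (1 + 2 * ξ) / 2 * n)
              then (T * (p ^ 2 * Real.exp (4 * u))) ^ m else (T * p) ^ m) :=
            Finset.sum_le_sum fun y _ => hstep y
        _ = ((univ.filter fun y : Fin n → Bool => ((agr x y : ℝ) ≤ (1 + 2 * ξ) / 2 * n)).card : ℝ)
              * (T * (p ^ 2 * Real.exp (4 * u))) ^ m
            + ((univ.filter fun y : Fin n → Bool =>
                ¬((agr x y : ℝ) ≤ (1 + 2 * ξ) / 2 * n)).card : ℝ) * (T * p) ^ m := by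
            rw [Finset.sum_ite, Finset.sum_const, Finset.sum_const, nsmul_eq_mul, nsmul_eq_mul]
        _ ≤ 2 ^ n * (T * (p ^ 2 * Real.exp (4 * u))) ^ m
            + (2 ^ n * Real.exp (-ξ ^ 2 * n)) * (T * p) ^ m := by
            have hc1 : ((univ.filter fun y : Fin n → Bool =>
                ((agr x y : ℝ) ≤ (1 + 2 * ξ) / 2 * n)).card : ℝ) ≤ 2 ^ n := by
              have h := Finset.card_filter_le (univ : Finset (Fin n → Bool))
                (fun y => ((agr x y : ℝ) ≤ (1 + 2 * ξ) / 2 * n))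
              have h2 : (Finset.univ : Finset (Fin n → Bool)).card = 2 ^ n := by
                rw [Finset.card_univ]
                simp [Fintype.card_fun]
              rw [h2] at h
              exact_mod_cast h
            have hc2 := hfar x
            have hpos1 : (0:ℝ) ≤ (T * (p ^ 2 * Real.exp (4 * u))) ^ m :=
              pow_nonneg (mul_nonneg hT0.le
                (mul_nonneg (pow_nonneg hp0.le 2) (Real.exp_pos _).le)) m
            have hpos2 : (0:ℝ) ≤ (T * p) ^ m := pow_nonneg (mul_nonneg hT0.le hp0.le) m
            have := mul_le_mul_of_nonneg_right hc1 hpos1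
            have := mul_le_mul_of_nonneg_right hc2 hpos2
            linarith
    calc ∑ x : Fin n → Bool, ∑ y : Fin n → Bool, (s2 x y : ℝ) ^ m
        ≤ ∑ _x : Fin n → Bool, (2 ^ n * (T * (p ^ 2 * Real.exp (4 * u))) ^ m
            + (2 ^ n * Real.exp (-ξ ^ 2 * n)) * (T * p) ^ m) :=
          Finset.sum_le_sum fun x _ => hx x
      _ = 2 ^ n * (2 ^ n * (T * (p ^ 2 * Real.exp (4 * u))) ^ m
            + (2 ^ n * Real.exp (-ξ ^ 2 * n)) * (T * p) ^ m) := by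
          rw [Finset.sum_const, Finset.card_univ, nsmul_eq_mul]
          congr 1
          simp [Fintype.card_fun]
  have hcardΩ : ((Fintype.card (Fin m → Clause n k)) : ℝ) = T ^ m := by
    rw [Fintype.card_fun, cardCl, hT]
    push_cast
    simp [mul_pow]
  have hsumg : ∑ ω : Fin m → Clause n k, g ω = (T * p) ^ m := by
    simp only [hg]
    rw [← Finset.sum_div, hA1]
    field_simp
  have hsumg2 : ∑ ω : Fin m → Clause n k, (g ω) ^ 2
      ≤ (T * (p ^ 2 * Real.exp (4 * u))) ^ m + Real.exp (-ξ ^ 2 * n) * (T * p) ^ m := by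
    simp only [hg]
    have hrw : ∀ ω : Fin m → Clause n k,
        (((univ.filter fun x : Fin n → Bool => ∀ i, satClause (ω i) x).card : ℝ) / 2 ^ n) ^ 2
        = ((univ.filter fun x : Fin n → Bool => ∀ i, satClause (ω i) x).card : ℝ) ^ 2
            / (2 ^ n * 2 ^ n) := by
      intro ω
      rw [div_pow]
      congr 1
      ring
    rw [Finset.sum_congr rfl fun ω _ => hrw ω, ← Finset.sum_div, hA2]
    rw [div_le_iff₀ (by positivity)]
    calc ∑ x : Fin n → Bool, ∑ y : Fin n → Bool, (s2 x y : ℝ) ^ m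
        ≤ 2 ^ n * (2 ^ n * (T * (p ^ 2 * Real.exp (4 * u))) ^ m
            + (2 ^ n * Real.exp (-ξ ^ 2 * n)) * (T * p) ^ m) := hA2bound
      _ = ((T * (p ^ 2 * Real.exp (4 * u))) ^ m + Real.exp (-ξ ^ 2 * n) * (T * p) ^ m)
            * (2 ^ n * 2 ^ n) := by ring
  have hvar : ∑ ω : Fin m → Clause n k, (g ω - p ^ m) ^ 2
      ≤ T ^ m * ((p ^ m) ^ 2 * (Real.exp (4 * u * m) - 1) + Real.exp (-ξ ^ 2 * n) * p ^ m) := by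
    have hterm : ∀ ω : Fin m → Clause n k,
        (g ω - p ^ m) ^ 2 = (g ω) ^ 2 - 2 * p ^ m * g ω + (p ^ m) ^ 2 := fun ω => by ring
    rw [Finset.sum_congr rfl fun ω _ => hterm ω]
    rw [Finset.sum_add_distrib, Finset.sum_sub_distrib, ← Finset.mul_sum, Finset.sum_const,
      Finset.card_univ, nsmul_eq_mul, hcardΩ, hsumg]
    have he : Real.exp (4 * u) ^ m = Real.exp (4 * u * m) := by
      rw [← Real.exp_nat_mul]
      congr 1
      ring
    have hkey2 : (T * (p ^ 2 * Real.exp (4 * u))) ^ m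
        = T ^ m * (p ^ m) ^ 2 * Real.exp (4 * u * m) := by
      rw [← he]
      ring
    have hkey3 : (T * p) ^ m = T ^ m * p ^ m := mul_pow T p m
    have h8 := hsumg2
    rw [hkey2, hkey3] at h8
    rw [hkey3]
    linarith [h8]
  have hgmu : ∀ ω : Fin m → Clause n k,
      muF (fun x : Fin n → Bool => decide (∀ i, satClause (ω i) x)) = g ω := by
    intro ω
    have hset : (univ.filter fun x : Fin n → Bool =>
        (decide (∀ i, satClause (ω i) x)) = true)
        = (univ.filter fun x : Fin n → Bool => ∀ i, satClause (ω i) x) := by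
      apply Finset.filter_congr
      intro x _
      simp
    simp only [hg]
    unfold muF
    rw [hset]
  have hPm : (0:ℝ) < p ^ m := pow_pos hp0 m
  have hcheb := chebyshev_count (g := g) (p ^ m) (ε * p ^ m) (mul_pos hε hPm)
  have hbadset : (univ.filter fun ω : Fin m → Clause n k => ¬(|g ω - p ^ m| ≤ ε * p ^ m))
      = (univ.filter fun ω : Fin m → Clause n k =>
          ¬(|muF (fun x : Fin n → Bool => decide (∀ i, satClause (ω i) x)) - p ^ m|
              ≤ ε * p ^ m)) := by
    apply Finset.filter_congr
    intro ω _
    rw [hgmu ω]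
  have hbad : ((univ.filter fun ω : Fin m → Clause n k =>
      ¬(|muF (fun x : Fin n → Bool => decide (∀ i, satClause (ω i) x)) - p ^ m|
          ≤ ε * p ^ m)).card : ℝ)
      ≤ T ^ m * ((Real.exp (4 * u * m) - 1) + Real.exp (-ξ ^ 2 * n) / p ^ m) / ε ^ 2 := by
    rw [← hbadset]
    have h10 := le_trans hcheb hvar
    have h11 : (ε * p ^ m) ^ 2 = ε ^ 2 * (p ^ m) ^ 2 := by ring
    rw [h11] at h10
    have h12 : T ^ m * ((Real.exp (4 * u * m) - 1) + Real.exp (-ξ ^ 2 * n) / p ^ m) / ε ^ 2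
        = (T ^ m * ((p ^ m) ^ 2 * (Real.exp (4 * u * m) - 1)
            + Real.exp (-ξ ^ 2 * n) * p ^ m)) / ((p ^ m) ^ 2 * ε ^ 2) := by
      field_simp
    rw [h12, le_div_iff₀ (mul_pos (pow_pos hPm 2) (pow_pos hε 2))]
    calc ((univ.filter fun ω : Fin m → Clause n k =>
            ¬(|g ω - p ^ m| ≤ ε * p ^ m)).card : ℝ) * ((p ^ m) ^ 2 * ε ^ 2)
        = ((univ.filter fun ω : Fin m → Clause n k =>
            ¬(|g ω - p ^ m| ≤ ε * p ^ m)).card : ℝ) * (ε ^ 2 * (p ^ m) ^ 2) := by ring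
      _ ≤ T ^ m * ((p ^ m) ^ 2 * (Real.exp (4 * u * m) - 1)
            + Real.exp (-ξ ^ 2 * n) * p ^ m) := h10
  have hgb := Finset.card_filter_add_card_filter_not
    (s := (univ : Finset (Fin m → Clause n k)))
    (p := fun ω => |muF (fun x : Fin n → Bool => decide (∀ i, satClause (ω i) x)) - p ^ m|
        ≤ ε * p ^ m)
  rw [hcardΩ, le_div_iff₀ (pow_pos hT0 m)]
  have hgood : ((univ.filter (fun ω : Fin m → Clause n k =>
      |muF (fun x : Fin n → Bool => decide (∀ i, satClause (ω i) x)) - p ^ m|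
        ≤ ε * p ^ m)).card : ℝ)
      = T ^ m - ((univ.filter fun ω : Fin m → Clause n k =>
          ¬(|muF (fun x : Fin n → Bool => decide (∀ i, satClause (ω i) x)) - p ^ m|
              ≤ ε * p ^ m)).card : ℝ) := by
    have h13 : ((univ.filter (fun ω : Fin m → Clause n k =>
        |muF (fun x : Fin n → Bool => decide (∀ i, satClause (ω i) x)) - p ^ m|
          ≤ ε * p ^ m)).card : ℝ)
        + ((univ.filter fun ω : Fin m → Clause n k =>
            ¬(|muF (fun x : Fin n → Bool => decide (∀ i, satClause (ω i) x)) - p ^ m|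
                ≤ ε * p ^ m)).card : ℝ) = T ^ m := by
      rw [← hcardΩ, ← Finset.card_univ]
      exact_mod_cast hgb
    linarith
  rw [hgood]
  have h40 : (1 - (Real.exp (4 * u * (m:ℝ)) - 1 + Real.exp (-ξ ^ 2 * (n:ℝ)) / p ^ m) / ε ^ 2) * T ^ m
      = T ^ m - T ^ m * (Real.exp (4 * u * (m:ℝ)) - 1 + Real.exp (-ξ ^ 2 * (n:ℝ)) / p ^ m) / ε ^ 2 := by
    ring
  rw [h40]
  linarith [hbad]

open scoped Classical in
lemma fraction_m0 (n k m : ℕ) (hm : m = 0) (ε : ℝ) (hε : 0 < ε) :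
    (((Finset.univ :
          Finset (Fin m → ({K : Finset (Fin n) // K.card = k} × (Fin n → Bool)))).filter
        (fun ω =>
          |muF (fun x : Fin n → Bool => decide (∀ i, satClause (ω i) x))
              - (1 - (2 : ℝ) ^ (-(k : ℤ))) ^ m|
            ≤ ε * (1 - (2 : ℝ) ^ (-(k : ℤ))) ^ m)).card : ℝ)
      / (Fintype.card
          (Fin m → ({K : Finset (Fin n) // K.card = k} × (Fin n → Bool))) : ℝ) = 1 := by
  have hempty : IsEmpty (Fin m) := by rw [hm]; infer_instance
  have hpred : ∀ ω : Fin m → ({K : Finset (Fin n) // K.card = k} × (Fin n → Bool)),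
      |muF (fun x : Fin n → Bool => decide (∀ i, satClause (ω i) x))
          - (1 - (2 : ℝ) ^ (-(k : ℤ))) ^ m| ≤ ε * (1 - (2 : ℝ) ^ (-(k : ℤ))) ^ m := by
    intro ω
    have hmu : muF (fun x : Fin n → Bool => decide (∀ i, satClause (ω i) x)) = 1 := by
      unfold muF
      have hall : (univ.filter fun x : Fin n → Bool =>
          decide (∀ i, satClause (ω i) x) = true) = univ := by
        ext x
        simp [hempty.forall_iff]
      rw [hall, Finset.card_univ]
      have hcard : Fintype.card (Fin n → Bool) = 2 ^ n := by simp [Fintype.card_fun]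
      rw [hcard]
      push_cast
      field_simp
    rw [hmu, hm, pow_zero]
    simp
    linarith
  rw [Finset.filter_true_of_mem (fun ω _ => hpred ω), Finset.card_univ]
  rw [div_self]
  have : Fintype.card (Fin m → ({K : Finset (Fin n) // K.card = k} × (Fin n → Bool)))
      = 1 := by
    rw [Fintype.card_fun]
    rw [hm]
    simp
  rw [this]
  norm_num

open scoped Classical in
lemma fraction_upper (n k m : ℕ) (ξ ε : ℝ) :
    (((Finset.univ :
          Finset (Fin m → ({K : Finset (Fin n) // K.card = k} × (Fin n → Bool)))).filter
        (fun ω =>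
          |muF (fun x : Fin n → Bool => decide (∀ i, satClause (ω i) x))
              - (1 - (2 : ℝ) ^ (-(k : ℤ))) ^ m|
            ≤ ε * (1 - (2 : ℝ) ^ (-(k : ℤ))) ^ m)).card : ℝ)
      / (Fintype.card
          (Fin m → ({K : Finset (Fin n) // K.card = k} × (Fin n → Bool))) : ℝ) ≤ 1 := by
  apply div_le_one_of_le₀
  · rw [← Finset.card_univ]
    exact_mod_cast Finset.card_filter_le _ _
  · positivity


open scoped Classical in
/-- Let `f = ∧_{i=1}^m C_i` with independent uniformly random `k`-clauses. If there is
`ξ > 0` with `exp(-ξ²n) = o((1-2^{-k})^m)` and `((1+2ξ)/4)^k = o(1/m)`, then with high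
probability `μ(f) = (1+o(1))(1-2^{-k})^m`: for every `ε > 0`, the probability that
`μ(f)` is within a factor `1 ± ε` of `(1-2^{-k})^m` tends to `1`. -/
theorem whp_measure_of_random_cnf (k m : ℕ → ℕ) (hkn : ∀ n, k n ≤ n)
    (ξ : ℝ) (hξ : 0 < ξ)
    (h1 : Tendsto (fun n : ℕ =>
        Real.exp (-ξ ^ 2 * n) / (1 - (2 : ℝ) ^ (-(k n : ℤ))) ^ (m n)) atTop (nhds 0))
    (h2 : Tendsto (fun n : ℕ => ((1 + 2 * ξ) / 4) ^ (k n) * (m n : ℝ)) atTop (nhds 0))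
    (ε : ℝ) (hε : 0 < ε) :
    Tendsto (fun n : ℕ =>
        (((Finset.univ :
              Finset (Fin (m n) → ({K : Finset (Fin n) // K.card = k n} × (Fin n → Bool)))).filter
            (fun ω =>
              |muF (fun x : Fin n → Bool => decide (∀ i, satClause (ω i) x))
                  - (1 - (2 : ℝ) ^ (-(k n : ℤ))) ^ (m n)|
                ≤ ε * (1 - (2 : ℝ) ^ (-(k n : ℤ))) ^ (m n))).card : ℝ)
          / (Fintype.card
              (Fin (m n) → ({K : Finset (Fin n) // K.card = k n} × (Fin n → Bool))) : ℝ))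
      atTop (nhds 1) := by
  have hexp2 : Tendsto (fun n : ℕ =>
      Real.exp (4 * ((1 + 2 * ξ) / 4) ^ (k n) * (m n))) atTop (nhds 1) := by
    have h3 : Tendsto (fun n : ℕ =>
        4 * (((1 + 2 * ξ) / 4) ^ (k n) * (m n : ℝ))) atTop (nhds 0) := by
      simpa using h2.const_mul 4
    have h4 := (Real.continuous_exp.tendsto 0).comp h3
    rw [Real.exp_zero] at h4
    have heq : (fun n : ℕ => Real.exp (4 * ((1 + 2 * ξ) / 4) ^ (k n) * (m n)))
        = fun n : ℕ => Real.exp (4 * (((1 + 2 * ξ) / 4) ^ (k n) * (m n : ℝ))) := by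
      funext n
      rw [mul_assoc]
    rw [heq]
    exact h4
  have hBnd : Tendsto (fun n : ℕ => 1 - (Real.exp (4 * ((1 + 2 * ξ) / 4) ^ (k n) * (m n)) - 1
      + Real.exp (-ξ ^ 2 * n) / (1 - (2 : ℝ) ^ (-(k n : ℤ))) ^ (m n)) / ε ^ 2) atTop
      (nhds 1) := by
    have h5 := ((hexp2.sub_const 1).add h1).div_const (ε ^ 2)
    have h6 : ((1:ℝ) - 1 + 0) / ε ^ 2 = 0 := by ring
    rw [h6] at h5
    have h8 := (tendsto_const_nhds (α := ℕ) (x := (1:ℝ)) (f := atTop)).sub h5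
    simpa using h8
  refine tendsto_of_tendsto_of_tendsto_of_le_of_le' hBnd tendsto_const_nhds ?_ ?_
  · have hev : ∀ᶠ n in atTop, ((1 + 2 * ξ) / 4) ^ (k n) * (m n : ℝ) < 1 / 2 :=
      h2.eventually (gt_mem_nhds (by norm_num))
    filter_upwards [hev] with n hn
    rcases Nat.eq_zero_or_pos (k n) with hk0 | hk1
    · have hm0 : m n = 0 := by
        by_contra hm
        have h9 : (1:ℝ) ≤ ((1 + 2 * ξ) / 4) ^ (k n) * (m n : ℝ) := by
          rw [hk0, pow_zero, one_mul]
          exact_mod_cast Nat.one_le_iff_ne_zero.2 hm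
        linarith
      rw [fraction_m0 n (k n) (m n) hm0 ε hε]
      have h10 : (0:ℝ) ≤ Real.exp (4 * ((1 + 2 * ξ) / 4) ^ (k n) * (m n))
          - 1 + Real.exp (-ξ ^ 2 * n) / (1 - (2 : ℝ) ^ (-(k n : ℤ))) ^ (m n) := by
        rw [hm0]
        push_cast
        rw [mul_zero, Real.exp_zero, pow_zero]
        simp [Real.exp_nonneg]
      have h11 : (0:ℝ) ≤ (Real.exp (4 * ((1 + 2 * ξ) / 4) ^ (k n) * (m n))
          - 1 + Real.exp (-ξ ^ 2 * n) / (1 - (2 : ℝ) ^ (-(k n : ℤ))) ^ (m n)) / ε ^ 2 :=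
        div_nonneg h10 (sq_nonneg ε)
      linarith
    · exact fraction_lower n (k n) (m n) hk1 (hkn n) ξ ε hξ hε
  · filter_upwards with n
    exact fraction_upper n (k n) (m n) ξ ε
end
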